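/- arXiv:1709.06329 — 12 statements merged into one kernel-verified Lean document; each statement's English description precedes it below -/
import Mathlib

section
/- The map from the subspace lattice P to the N-cube {0,1}^N that sends a subspace y ∈ P to its location is well defined (every subspace has a location), order-preserving, and surjective. -/
/-- `μ : Fin N → ℕ` (with values in `{0,1}`) is the location of the subspace `y`
with respect to the flag `x`: `dim (y ⊓ x (m+1)) = μ 0 + ⋯ + μ m` for all `m`. -/
def IsLocation {F H : Type*} [Field F] [AddCommGroup H] [Module F H] {N : ℕ}
    (x : Fin (N + 1) → Submodule F H) (y : Submodule F H) (μ : Fin N → ℕ) : Prop :=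
  (∀ i, μ i ≤ 1) ∧
    ∀ m : Fin N, Module.finrank F ↥(y ⊓ x m.succ) = ∑ i ∈ Finset.Iic m, μ i

/-!
By the modular law `dim (a ⊔ b) + dim (a ⊓ b) = dim a + dim b`, the jump
`dim (y ⊓ x (m+1)) - dim (y ⊓ x m)` is monotone in `y` and at most
`dim x (m+1) - dim x m = 1`; the sequence of jumps is therefore the unique location of `y`, and it
is order-preserving. For surjectivity pick `v i ∈ x (i+1) \ x i`. These vectors are linearly
independent and span the flag, and spans of two subfamilies of a linearly independent family meet
in the span of the common subfamily, so `span {v i | μ i = 1}` has location `μ`.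
-/

open Module Submodule Finset

section General

theorem Fin.partialSum_succ_eq_sum_Iic {M : Type*} [AddCommMonoid M] {N : ℕ} (μ : Fin N → M)
    (m : Fin N) : Fin.partialSum μ m.succ = ∑ i ∈ Iic m, μ i := by
  suffices h : ∀ j : Fin (N + 1), Fin.partialSum μ j = ∑ i with i.castSucc < j, μ i by
    rw [h]
    congr 1
    ext i
    simp [Fin.castSucc_lt_succ_iff]
  intro j
  induction j using Fin.induction with
  | zero => simp
  | succ m ih =>
    have hins : (univ.filter fun i : Fin N => i.castSucc < m.succ) =
        insert m (univ.filter fun i => i.castSucc < m.castSucc) := by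
      ext i
      simp [Fin.castSucc_lt_succ_iff, le_iff_lt_or_eq, or_comm]
    rw [Fin.partialSum_succ, ih, hins, sum_insert (by simp), add_comm]

theorem Fin.eq_partialSum_iff {M : Type*} [AddCommMonoid M] {N : ℕ} {f : Fin (N + 1) → M}
    {μ : Fin N → M} : f = Fin.partialSum μ ↔ f 0 = 0 ∧ ∀ m, f m.succ = f m.castSucc + μ m := by
  constructor
  · rintro rfl
    exact ⟨Fin.partialSum_zero μ, Fin.partialSum_succ μ⟩
  · rintro ⟨h0, hsucc⟩
    funext j
    induction j using Fin.induction with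
    | zero => simp [h0]
    | succ m ih => rw [hsucc, ih, Fin.partialSum_succ]

variable {R M ι : Type*} [Semiring R] [AddCommMonoid M] [Module R M]

theorem LinearIndependent.span_image_inter {v : ι → M} (hv : LinearIndependent R v)
    (s t : Set ι) : span R (v '' (s ∩ t)) = span R (v '' s) ⊓ span R (v '' t) := by
  refine le_antisymm (le_inf (span_mono (Set.image_mono Set.inter_subset_left))
    (span_mono (Set.image_mono Set.inter_subset_right))) ?_
  intro w hw
  obtain ⟨hs, ht⟩ := mem_inf.1 hw
  rw [Finsupp.mem_span_image_iff_linearCombination] at hs ht ⊢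
  obtain ⟨l, hl, rfl⟩ := hs
  obtain ⟨l', hl', hll'⟩ := ht
  obtain rfl : l = l' := hv hll'.symm
  exact ⟨l, by rw [Finsupp.supported_inter]; exact ⟨hl, hl'⟩, rfl⟩

theorem LinearIndependent.finrank_span_image_finset [StrongRankCondition R] [Nontrivial R]
    {v : ι → M} (hv : LinearIndependent R v) (s : Finset ι) : finrank R (span R (v '' s)) = #s := by
  rw [Set.image_eq_range]
  exact (finrank_span_eq_card (hv.comp _ Subtype.val_injective)).trans (by simp)

end General

section Flag

variable {K V : Type*} [Field K] [AddCommGroup V] [Module K V] [FiniteDimensional K V]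

theorem finrank_inf_add_finrank_inf_le {y z a b : Submodule K V} (hyz : y ≤ z) (hab : a ≤ b) :
    finrank K ↥(y ⊓ b) + finrank K ↥(z ⊓ a) ≤ finrank K ↥(z ⊓ b) + finrank K ↥(y ⊓ a) := by
  have hmeet : y ⊓ b ⊓ (z ⊓ a) = y ⊓ a := by
    rw [inf_inf_inf_comm, inf_eq_left.2 hyz, inf_eq_right.2 hab]
  have hjoin : y ⊓ b ⊔ z ⊓ a ≤ z ⊓ b := sup_le (inf_le_inf_right b hyz) (inf_le_inf_left z hab)
  have hmodular := finrank_sup_add_finrank_inf_eq (y ⊓ b) (z ⊓ a)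
  rw [hmeet] at hmodular
  have := finrank_mono hjoin
  omega

variable {N : ℕ} {x : Fin (N + 1) → Submodule K V}

theorem isLocation_iff (hx0 : x 0 = ⊥) {y : Submodule K V} {μ : Fin N → ℕ} :
    IsLocation x y μ ↔ (∀ i, μ i ≤ 1) ∧
      ∀ m, finrank K ↥(y ⊓ x m.succ) = finrank K ↥(y ⊓ x m.castSucc) + μ m := by
  have hf0 : finrank K ↥(y ⊓ x 0) = 0 := by simp [hx0]
  have hsums : (∀ m : Fin N, finrank K ↥(y ⊓ x m.succ) = ∑ i ∈ Iic m, μ i) ↔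
      (fun j => finrank K ↥(y ⊓ x j)) = Fin.partialSum μ := by
    simp only [← Fin.partialSum_succ_eq_sum_Iic, funext_iff, Fin.forall_fin_succ, hf0,
      Fin.partialSum_zero, true_and]
  rw [IsLocation, hsums, Fin.eq_partialSum_iff]
  simp [hf0]

theorem IsLocation.unique (hx0 : x 0 = ⊥) {y : Submodule K V} {μ ν : Fin N → ℕ}
    (hμ : IsLocation x y μ) (hν : IsLocation x y ν) : μ = ν := by
  rw [isLocation_iff hx0] at hμ hν
  funext m
  have hμm := hμ.2 m
  have hνm := hν.2 m
  omega

theorem IsLocation.le_of_le (hx0 : x 0 = ⊥) (hx : Monotone x) {y z : Submodule K V}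
    {μ ν : Fin N → ℕ} (hμ : IsLocation x y μ) (hν : IsLocation x z ν) (hyz : y ≤ z) (i : Fin N) :
    μ i ≤ ν i := by
  rw [isLocation_iff hx0] at hμ hν
  have hjump := finrank_inf_add_finrank_inf_le hyz (hx i.castSucc_le_succ)
  have hμi := hμ.2 i
  have hνi := hν.2 i
  omega

theorem isLocation_finrank_inf_sub (hrank : ∀ i, finrank K (x i) = i) (hx : Monotone x)
    (y : Submodule K V) :
    IsLocation x y fun m => finrank K ↥(y ⊓ x m.succ) - finrank K ↥(y ⊓ x m.castSucc) := by
  have hx0 : x 0 = ⊥ := finrank_eq_zero.1 (hrank 0)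
  refine (isLocation_iff hx0).2 ⟨fun i => ?_, fun i => ?_⟩
  · have hjump := finrank_inf_add_finrank_inf_le le_top (hx i.castSucc_le_succ) (y := y)
    rw [top_inf_eq, top_inf_eq, hrank, hrank, Fin.val_succ, Fin.val_castSucc] at hjump
    omega
  · have := finrank_mono (inf_le_inf_left y (hx i.castSucc_le_succ))
    omega

theorem span_image_eq_of_mem_flag (hrank : ∀ i, finrank K (x i) = i) (hx : Monotone x)
    {v : Fin N → V} (hv : ∀ i, v i ∈ x i.succ) (hv' : ∀ i, v i ∉ x i.castSucc) (j : Fin (N + 1)) :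
    span K (v '' {i | i.castSucc < j}) = x j := by
  induction j using Fin.induction with
  | zero => simp [finrank_eq_zero.1 (hrank 0)]
  | succ m ih =>
    have hset : {i | i.castSucc < m.succ} = insert m {i | i.castSucc < m.castSucc} := by
      ext i
      simp [Fin.castSucc_lt_succ_iff, le_iff_lt_or_eq, or_comm]
    rw [hset, Set.image_insert_eq, span_insert, ih]
    have hlt : x m.castSucc < span K {v m} ⊔ x m.castSucc :=
      lt_of_le_of_ne le_sup_right fun h => hv' m (h ▸ mem_sup_left (mem_span_singleton_self _))
    refine eq_of_le_of_finrank_le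
      (sup_le ((span_singleton_le_iff_mem _ _).2 (hv m)) (hx m.castSucc_le_succ)) ?_
    have hdim := finrank_lt_finrank_of_lt hlt
    rw [hrank, Fin.val_castSucc] at hdim
    rw [hrank, Fin.val_succ]
    omega

theorem linearIndependent_of_mem_flag (hrank : ∀ i, finrank K (x i) = i) (hx : Monotone x)
    {v : Fin N → V} (hv : ∀ i, v i ∈ x i.succ) (hv' : ∀ i, v i ∉ x i.castSucc) :
    LinearIndependent K v := by
  have hspan := span_image_eq_of_mem_flag hrank hx hv hv' (Fin.last N)
  simp only [Fin.castSucc_lt_last, Set.ofPred_true, Set.image_univ] at hspan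
  rw [linearIndependent_iff_card_eq_finrank_span, Set.finrank, hspan, hrank]
  simp

theorem exists_isLocation (hrank : ∀ i, finrank K (x i) = i) (hx : StrictMono x)
    {μ : Fin N → ℕ} (hμ : ∀ i, μ i ≤ 1) : ∃ y, IsLocation x y μ := by
  choose v hv hv' using fun i : Fin N => SetLike.exists_of_lt (hx i.castSucc_lt_succ)
  have hspan := span_image_eq_of_mem_flag hrank hx.monotone hv hv'
  have hli := linearIndependent_of_mem_flag hrank hx.monotone hv hv'
  refine ⟨span K (v '' {i | μ i = 1}), hμ, fun m => ?_⟩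
  have hIic : {i | i.castSucc < m.succ} = (Iic m : Set (Fin N)) := by
    ext i
    simp [Fin.castSucc_lt_succ_iff]
  have hinter : {i | μ i = 1} ∩ (Iic m : Set (Fin N)) = ((Iic m).filter (μ · = 1) : Set _) := by
    ext i
    simp [and_comm]
  rw [← hspan, hIic, ← hli.span_image_inter, hinter, hli.finrank_span_image_finset, card_filter]
  refine sum_congr rfl fun i _ => ?_
  rcases Nat.le_one_iff_eq_zero_or_eq_one.1 (hμ i) with h | h <;> simp [h]

end Flag

theorem stmt0_general {F : Type*} [Field F] {H : Type*} [AddCommGroup H] [Module F H]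
    [FiniteDimensional F H] {N : ℕ}
    (x : Fin (N + 1) → Submodule F H) (hrank : ∀ i, Module.finrank F ↥(x i) = (i : ℕ))
    (hmono : StrictMono x) :
    (∀ y : Submodule F H, ∃! μ : Fin N → ℕ, IsLocation x y μ) ∧
      (∀ y z : Submodule F H, ∀ μ ν : Fin N → ℕ,
        IsLocation x y μ → IsLocation x z ν → y ≤ z → ∀ i, μ i ≤ ν i) ∧
      (∀ μ : Fin N → ℕ, (∀ i, μ i ≤ 1) → ∃ y : Submodule F H, IsLocation x y μ) := by
  have hx0 : x 0 = ⊥ := finrank_eq_zero.1 (hrank 0)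
  refine ⟨fun y => ?_, fun y z μ ν hμ hν hyz => hμ.le_of_le hx0 hmono.monotone hν hyz,
    fun μ hμ => exists_isLocation hrank hmono hμ⟩
  have hloc := isLocation_finrank_inf_sub hrank hmono.monotone y
  exact ⟨_, hloc, fun ν hν => hν.unique hx0 hloc⟩

/-- The location map from the subspace lattice `P` to the `N`-cube is well defined
(every subspace has a unique location), order-preserving, and surjective. -/
theorem stmt0 {F : Type*} [Field F] [Fintype F] {H : Type*} [AddCommGroup H] [Module F H]
    [FiniteDimensional F H] {N : ℕ} (hN : 1 ≤ N) (hdim : Module.finrank F H = N)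
    (x : Fin (N + 1) → Submodule F H) (hrank : ∀ i, Module.finrank F ↥(x i) = (i : ℕ))
    (hmono : StrictMono x) :
    (∀ y : Submodule F H, ∃! μ : Fin N → ℕ, IsLocation x y μ) ∧
      (∀ y z : Submodule F H, ∀ μ ν : Fin N → ℕ,
        IsLocation x y μ → IsLocation x z ν → y ≤ z → ∀ i, μ i ≤ ν i) ∧
      (∀ μ : Fin N → ℕ, (∀ i, μ i ≤ 1) → ∃ y : Submodule F H, IsLocation x y μ) :=
  stmt0_general x hrank hmono
end

section
/- Let 1 ≤ m < n ≤ N and let μ ∈ {0,1}^N with μ_m = μ_n = 1. Given z ∈ P_μ and y ∈ P_{μ − m̂ − n̂} with y ⊆ z, there exists a unique element of P_{μ − n̂} which m-covers y and which is n-covered by z. -/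
/-- `y` covers `z` in the subspace lattice. -/
def Covers {F H : Type*} [Field F] [AddCommGroup H] [Module F H]
    (y z : Submodule F H) : Prop :=
  z ≤ y ∧ Module.finrank F ↥z + 1 = Module.finrank F ↥y

/-- `y` `m`-covers `z`: `y` covers `z` and the location of `y` is the location of `z`
plus the tuple with a `1` in coordinate `m` and `0` elsewhere. -/
def MCovers {F H : Type*} [Field F] [AddCommGroup H] [Module F H] {N : ℕ}
    (x : Fin (N + 1) → Submodule F H) (m : Fin N) (y z : Submodule F H) : Prop :=
  Covers y z ∧ ∃ μ ν : Fin N → ℕ, IsLocation x y μ ∧ IsLocation x z ν ∧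
    ∀ i, μ i = ν i + if i = m then 1 else 0

open Module Finset

lemma sub_ite_add_ite_cancel {α : Type*} [DecidableEq α] {f : α → ℕ} {a : α} (ha : 1 ≤ f a)
    (i : α) : f i - (if i = a then 1 else 0) + (if i = a then 1 else 0) = f i := by
  split_ifs with h
  · subst h; omega
  · rfl

lemma sum_Iic_add_ite {α : Type*} [Preorder α] [LocallyFiniteOrderBot α] [DecidableEq α]
    [DecidableLE α] (f : α → ℕ) (a k : α) :
    ∑ i ∈ Iic k, (f i + if i = a then 1 else 0) = (∑ i ∈ Iic k, f i) + if a ≤ k then 1 else 0 := by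
  rw [sum_add_distrib, sum_ite_eq', if_congr mem_Iic rfl rfl]

section Subspaces

variable {F H : Type*} [Field F] [AddCommGroup H] [Module F H]
  {N : ℕ} {x : Fin (N + 1) → Submodule F H}

lemma IsLocation.finrank_inf_succ_eq_add {y z : Submodule F H} {μ ν : Fin N → ℕ} {a : Fin N}
    (hy : IsLocation x y μ) (hz : IsLocation x z ν) (h : ∀ i, μ i = ν i + if i = a then 1 else 0)
    (k : Fin N) :
    finrank F ↥(y ⊓ x k.succ) = finrank F ↥(z ⊓ x k.succ) + if a ≤ k then 1 else 0 := by
  rw [hy.2, hz.2, ← sum_Iic_add_ite]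
  exact sum_congr rfl fun i _ => h i

lemma IsLocation.of_finrank_inf_succ_eq_add {y z : Submodule F H} {μ ν : Fin N → ℕ} {a : Fin N}
    (hz : IsLocation x z ν) (hμ : ∀ i, μ i ≤ 1) (h : ∀ i, μ i = ν i + if i = a then 1 else 0)
    (hrank : ∀ k, finrank F ↥(y ⊓ x k.succ) = finrank F ↥(z ⊓ x k.succ) + if a ≤ k then 1 else 0) :
    IsLocation x y μ := by
  refine ⟨hμ, fun k => ?_⟩
  rw [hrank, hz.2, ← sum_Iic_add_ite]
  exact sum_congr rfl fun i _ => (h i).symm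

lemma mcovers_of_le_of_isLocation (htop : x (Fin.last N) = ⊤) {y z : Submodule F H}
    {μ ν : Fin N → ℕ} {a : Fin N} (hzy : z ≤ y) (hy : IsLocation x y μ) (hz : IsLocation x z ν)
    (h : ∀ i, μ i = ν i + if i = a then 1 else 0) : MCovers x a y z := by
  refine ⟨⟨hzy, ?_⟩, μ, ν, hy, hz, h⟩
  cases N with
  | zero => exact a.elim0
  | succ N =>
    have := hy.finrank_inf_succ_eq_add hz h (Fin.last N)
    rw [Fin.succ_last, htop, inf_top_eq, inf_top_eq, if_pos (Fin.le_last a)] at this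
    exact this.symm

variable [FiniteDimensional F H]

lemma finrank_sup_inf_inf_add_finrank {y z U V : Submodule F H} (hyz : y ≤ z) (hUV : U ≤ V) :
    finrank F ↥((y ⊔ z ⊓ U) ⊓ V) + finrank F ↥(y ⊓ U) =
      finrank F ↥(y ⊓ V) + finrank F ↥(z ⊓ U) := by
  have hsup : (y ⊔ z ⊓ U) ⊓ V = y ⊓ V ⊔ z ⊓ U := by
    rw [sup_comm, sup_inf_assoc_of_le _ (inf_le_right.trans hUV), sup_comm]
  have hinf : y ⊓ V ⊓ (z ⊓ U) = y ⊓ U := by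
    rw [inf_inf_inf_comm, inf_eq_left.2 hyz, inf_eq_right.2 hUV]
  rw [hsup, ← hinf]
  exact Submodule.finrank_sup_add_finrank_inf_eq _ _

lemma eq_sup_inf_of_le_of_finrank_le {y z w U : Submodule F H} (hyw : y ≤ w) (hwz : w ≤ z)
    (hU : finrank F ↥(z ⊓ U) ≤ finrank F ↥(w ⊓ U))
    (hw : finrank F ↥w ≤ finrank F ↥(y ⊔ z ⊓ U)) : w = y ⊔ z ⊓ U := by
  have hwU : w ⊓ U = z ⊓ U := Submodule.eq_of_le_of_finrank_le (inf_le_inf_right _ hwz) hU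
  exact (Submodule.eq_of_le_of_finrank_le (sup_le hyw (hwU ▸ inf_le_left)) hw).symm

lemma finrank_sup_inf_inf_succ (hx : Monotone x) {y z : Submodule F H} (hyz : y ≤ z) {m : Fin N}
    (hm : finrank F ↥(z ⊓ x m.succ) = finrank F ↥(y ⊓ x m.succ) + 1)
    (hlt : ∀ k < m, finrank F ↥(z ⊓ x k.succ) = finrank F ↥(y ⊓ x k.succ)) (k : Fin N) :
    finrank F ↥((y ⊔ z ⊓ x m.succ) ⊓ x k.succ) =
      finrank F ↥(y ⊓ x k.succ) + if m ≤ k then 1 else 0 := by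
  split_ifs with hk
  · have := finrank_sup_inf_inf_add_finrank hyz (hx (Fin.succ_le_succ_iff.2 hk))
    omega
  · refine le_antisymm ?_ (Submodule.finrank_mono (inf_le_inf_right _ le_sup_left))
    rw [add_zero, ← hlt k (not_le.1 hk)]
    exact Submodule.finrank_mono (inf_le_inf_right _ (sup_le hyz inf_le_left))

end Subspaces

theorem stmt3_general {F : Type*} [Field F] {H : Type*} [AddCommGroup H] [Module F H]
    [FiniteDimensional F H] {N : ℕ} (hdim : Module.finrank F H = N)
    (x : Fin (N + 1) → Submodule F H) (hrank : ∀ i, Module.finrank F ↥(x i) = (i : ℕ))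
    (hmono : StrictMono x)
    (m n : Fin N) (hmn : m < n) (μ : Fin N → ℕ)
    (hμm : μ m = 1) (hμn : μ n = 1)
    (z y : Submodule F H) (hz : IsLocation x z μ)
    (hy : IsLocation x y
      (fun i => μ i - (if i = m then 1 else 0) - (if i = n then 1 else 0)))
    (hyz : y ≤ z) :
    ∃! w : Submodule F H,
      IsLocation x w (fun i => μ i - if i = n then 1 else 0) ∧
        MCovers x m w y ∧ MCovers x n z w := by
  have htop : x (Fin.last N) = ⊤ :=
    Submodule.eq_top_of_finrank_eq (by rw [hrank, Fin.val_last, hdim])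
  set ν : Fin N → ℕ := fun i => μ i - (if i = m then 1 else 0) - (if i = n then 1 else 0)
  set lam : Fin N → ℕ := fun i => μ i - if i = n then 1 else 0
  have hμlam : ∀ i, μ i = lam i + if i = n then 1 else 0 :=
    fun i => (sub_ite_add_ite_cancel hμn.ge i).symm
  have hlamν : ∀ i, lam i = ν i + if i = m then 1 else 0 := fun i => by
    have hlam_m : 1 ≤ lam m := by simp [lam, hμm, hmn.ne]
    simp only [ν, tsub_right_comm (b := if i = m then 1 else 0)]
    exact (sub_ite_add_ite_cancel hlam_m i).symm
  have hzy : ∀ k, finrank F ↥(z ⊓ x k.succ) =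
      finrank F ↥(y ⊓ x k.succ) + (if m ≤ k then 1 else 0) + (if n ≤ k then 1 else 0) := by
    intro k
    rw [hz.2, hy.2, ← sum_Iic_add_ite, ← sum_Iic_add_ite]
    exact sum_congr rfl fun i _ => by rw [hμlam, hlamν]
  have hw : IsLocation x (y ⊔ z ⊓ x m.succ) lam := by
    refine hy.of_finrank_inf_succ_eq_add (fun i => (Nat.sub_le _ _).trans (hz.1 i)) hlamν
      (finrank_sup_inf_inf_succ hmono.monotone hyz ?_ ?_)
    · simpa [not_le.2 hmn] using hzy m
    · intro k hk
      simpa [not_le.2 hk, not_le.2 (hk.trans hmn)] using hzy k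
  have hwy := mcovers_of_le_of_isLocation htop le_sup_left hw hy hlamν
  refine ⟨_, ⟨hw, hwy, mcovers_of_le_of_isLocation htop (sup_le hyz inf_le_left) hz hw hμlam⟩, ?_⟩
  rintro w ⟨hw', hw'y, hzw'⟩
  refine eq_sup_inf_of_le_of_finrank_le hw'y.1.1 hzw'.1.1 ?_ (by rw [← hw'y.1.2, ← hwy.1.2])
  simp [hz.finrank_inf_succ_eq_add hw' hμlam m, not_le.2 hmn]

/-- Given `z ∈ P_μ` and `y ∈ P_{μ - m̂ - n̂}` with `y ⊆ z` (where `m < n`, `μ_m = μ_n = 1`),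
there is a unique element of `P_{μ - n̂}` which `m`-covers `y` and is `n`-covered by `z`. -/
theorem stmt3 {F : Type*} [Field F] [Fintype F] {H : Type*} [AddCommGroup H] [Module F H]
    [FiniteDimensional F H] {N : ℕ} (hN : 1 ≤ N) (hdim : Module.finrank F H = N)
    (x : Fin (N + 1) → Submodule F H) (hrank : ∀ i, Module.finrank F ↥(x i) = (i : ℕ))
    (hmono : StrictMono x)
    (m n : Fin N) (hmn : m < n) (μ : Fin N → ℕ) (hμ : ∀ i, μ i ≤ 1)
    (hμm : μ m = 1) (hμn : μ n = 1)
    (z y : Submodule F H) (hz : IsLocation x z μ)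
    (hy : IsLocation x y
      (fun i => μ i - (if i = m then 1 else 0) - (if i = n then 1 else 0)))
    (hyz : y ≤ z) :
    ∃! w : Submodule F H,
      IsLocation x w (fun i => μ i - if i = n then 1 else 0) ∧
        MCovers x m w y ∧ MCovers x n z w :=
  stmt3_general hdim x hrank hmono m n hmn μ hμm hμn z y hz hy hyz
end

section
/- Let 1 ≤ m < n ≤ N and let μ ∈ {0,1}^N with μ_m = μ_n = 1. Given z ∈ P_μ and y ∈ P_{μ − m̂ − n̂} with y ⊆ z, there exist exactly q elements of P_{μ − m̂} which n-cover y and which are m-covered by z. -/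
/-!
Every `w` in the set lies strictly between `y` and `z`, and `dim z = dim y + 2`. Comparing locations
at `x_{n-1}` gives `z ∩ x_{n-1} = (y ∩ x_{n-1}) ⊕ F u` for a single vector `u`; an intermediate `w`
has location `μ - m̂` exactly when `u ∉ w` (if `u ∈ w` its location is `μ - n̂`). The intermediate
subspaces are the `q + 1` lines of the plane `z / y`, and all of them but the line of `u` qualify.
-/

open Module Submodule Finset

section LinearAlgebra

variable {F H : Type*} [Field F] [AddCommGroup H] [Module F H]

theorem inf_sup_span_singleton_eq {y w : Submodule F H} {u : H} (hyw : y ≤ w) (hu : u ∉ w) :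
    w ⊓ (y ⊔ F ∙ u) = y := by
  rw [inf_comm, sup_inf_assoc_of_le _ hyw,
    (disjoint_span_singleton_of_notMem hu).symm.eq_bot, sup_bot_eq]

variable [FiniteDimensional F H]

theorem finrank_inf_add_finrank_le_of_le {w z : Submodule F H} (hwz : w ≤ z) (t : Submodule F H) :
    finrank F ↥(z ⊓ t) + finrank F ↥w ≤ finrank F ↥(w ⊓ t) + finrank F ↥z := by
  have hmod := finrank_sup_add_finrank_inf_eq w (z ⊓ t)
  rw [← inf_assoc, inf_eq_left.2 hwz] at hmod
  have := finrank_mono (sup_le hwz (inf_le_left : z ⊓ t ≤ z))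
  omega

theorem covers_sup_span_singleton {y : Submodule F H} {s : H} (hs : s ∉ y) :
    Covers (y ⊔ F ∙ s) y :=
  ⟨le_sup_left, (finrank_sup_span_singleton hs).symm⟩

theorem Covers.eq_sup_span_singleton {w y : Submodule F H} {s : H} (h : Covers w y)
    (hsw : s ∈ w) (hsy : s ∉ y) : w = y ⊔ F ∙ s :=
  (eq_of_le_of_finrank_le (sup_le h.1 ((span_singleton_le_iff_mem s w).2 hsw))
    (by rw [finrank_sup_span_singleton hsy, h.2])).symm

/-- The subspaces counted are the `y ⊔ F ∙ (v + c • u)`, `c : F`, for a fixed `v ∈ z` outside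
`y ⊔ F ∙ u`. -/
theorem ncard_covers_notMem [Fintype F] {y z : Submodule F H} {u : H} (hyz : y ≤ z)
    (hdim : finrank F ↥z = finrank F ↥y + 2) (huz : u ∈ z) (huy : u ∉ y) :
    {w : Submodule F H | Covers w y ∧ Covers z w ∧ u ∉ w}.ncard = Fintype.card F := by
  set w₀ := y ⊔ F ∙ u
  have hw₀z : w₀ ≤ z := sup_le hyz ((span_singleton_le_iff_mem u z).2 huz)
  obtain ⟨v, hvz, hvw₀⟩ : ∃ v ∈ z, v ∉ w₀ := SetLike.exists_of_lt <|
    lt_of_le_of_ne hw₀z fun h => by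
      have := finrank_sup_span_singleton huy
      rw [show y ⊔ F ∙ u = z from h] at this
      omega
  have hvc (c : F) : v + c • u ∉ y := fun h => hvw₀ <| by
    simpa using w₀.sub_mem (mem_sup_left h : v + c • u ∈ w₀)
      (w₀.smul_mem c (mem_sup_right (mem_span_singleton_self u)))
  have hcovers (c : F) : Covers (y ⊔ F ∙ (v + c • u)) y := covers_sup_span_singleton (hvc c)
  have hu (c : F) : u ∉ y ⊔ F ∙ (v + c • u) := fun h => hvw₀ <| by
    have : y ⊔ F ∙ (v + c • u) = w₀ := (hcovers c).eq_sup_span_singleton h huy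
    simpa using w₀.sub_mem (this ▸ mem_sup_right (mem_span_singleton_self _) :
      v + c • u ∈ w₀) (w₀.smul_mem c (mem_sup_right (mem_span_singleton_self u)))
  have hinj : Function.Injective fun c : F => y ⊔ F ∙ (v + c • u) := by
    intro c c' hcc
    by_contra hne
    have hc' : v + c' • u ∈ y ⊔ F ∙ (v + c • u) := by
      rw [show y ⊔ F ∙ (v + c • u) = y ⊔ F ∙ (v + c' • u) from hcc]
      exact mem_sup_right (mem_span_singleton_self _)
    have hdiff := sub_mem (mem_sup_right (mem_span_singleton_self _)) hc'
    rw [add_sub_add_left_eq_sub, ← sub_smul, smul_mem_iff _ (sub_ne_zero.2 hne)] at hdiff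
    exact hu c hdiff
  suffices {w : Submodule F H | Covers w y ∧ Covers z w ∧ u ∉ w} =
      Set.range fun c : F => y ⊔ F ∙ (v + c • u) by
    rw [this, Set.ncard_range_of_injective hinj, Nat.card_eq_fintype_card]
  ext w
  constructor
  · rintro ⟨hyw, hwz, huw⟩
    have hz : z = w ⊔ F ∙ u := hwz.eq_sup_span_singleton huz huw
    obtain ⟨w', hw', _, hau, hsum⟩ := mem_sup.1 (hz ▸ hvz)
    obtain ⟨a, rfl⟩ := mem_span_singleton.1 hau
    refine ⟨-a, (hyw.eq_sup_span_singleton ?_ (hvc _)).symm⟩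
    rwa [← hsum, neg_smul, add_neg_cancel_right]
  · rintro ⟨c, rfl⟩
    refine ⟨hcovers c, ⟨sup_le hyz ((span_singleton_le_iff_mem _ z).2 ?_), ?_⟩, hu c⟩
    · exact z.add_mem hvz (z.smul_mem c huz)
    · rw [hdim, ← (hcovers c).2]

end LinearAlgebra

theorem sum_tsub_ite_add_ite {ι : Type*} [DecidableEq ι] (s : Finset ι) {f : ι → ℕ} {n : ι}
    (hn : 1 ≤ f n) :
    ∑ i ∈ s, (f i - if i = n then 1 else 0) + (if n ∈ s then 1 else 0) = ∑ i ∈ s, f i := by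
  rw [← sum_ite_eq' s n fun _ => 1, ← sum_add_distrib]
  refine sum_congr rfl fun i _ => ?_
  split_ifs with h
  · subst h; omega
  · rfl

section Location

variable {F H : Type*} [Field F] [AddCommGroup H] [Module F H] {N : ℕ}
  {x : Fin (N + 1) → Submodule F H}

theorem IsLocation.finrank_inf_eq_sum (hx0 : x 0 = ⊥) {w : Submodule F H} {ν : Fin N → ℕ}
    (hw : IsLocation x w ν) (j : Fin (N + 1)) :
    finrank F ↥(w ⊓ x j) = ∑ i with i.castSucc < j, ν i := by
  rcases Fin.eq_zero_or_eq_succ j with rfl | ⟨k, rfl⟩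
  · rw [hx0]
    simp
  · rw [hw.2 k]
    congr 1
    ext i
    simp

theorem mcovers_of_isLocation {n : Fin N} {w y : Submodule F H} {ν : Fin N → ℕ}
    (hn : 1 ≤ ν n) (hwy : Covers w y) (hw : IsLocation x w ν)
    (hy : IsLocation x y fun i => ν i - if i = n then 1 else 0) : MCovers x n w y := by
  refine ⟨hwy, ν, _, hw, hy, fun i => ?_⟩
  split_ifs with h
  · subst h; omega
  · rfl

theorem IsLocation.finrank_inf_eq_add (hx0 : x 0 = ⊥) {m n : Fin N} (hmn : m ≠ n)
    {μ : Fin N → ℕ} (hμm : 1 ≤ μ m) (hμn : 1 ≤ μ n) {y z : Submodule F H}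
    (hz : IsLocation x z μ)
    (hy : IsLocation x y
      (fun i => μ i - (if i = m then 1 else 0) - (if i = n then 1 else 0)))
    (j : Fin (N + 1)) :
    finrank F ↥(z ⊓ x j) = finrank F ↥(y ⊓ x j) + (if m.castSucc < j then 1 else 0) +
      (if n.castSucc < j then 1 else 0) := by
  have hm := sum_tsub_ite_add_ite {i | i.castSucc < j} hμm
  have hn := sum_tsub_ite_add_ite {i | i.castSucc < j}
    (f := fun i => μ i - if i = m then 1 else 0) (n := n) (by simp [hmn.symm, hμn])
  simp only [mem_filter, mem_univ, true_and] at hm hn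
  rw [hz.finrank_inf_eq_sum hx0, hy.finrank_inf_eq_sum hx0, ← hm, ← hn]
  ac_rfl

variable [FiniteDimensional F H]

theorem inf_castSucc_eq_of_isLocation (hx0 : x 0 = ⊥) {n : Fin N} {w y : Submodule F H}
    {ν : Fin N → ℕ} (hyw : y ≤ w) (hw : IsLocation x w ν)
    (hy : IsLocation x y fun i => ν i - if i = n then 1 else 0) :
    w ⊓ x n.castSucc = y ⊓ x n.castSucc := by
  refine (eq_of_le_of_finrank_le (inf_le_inf_right _ hyw) ?_).symm
  rw [hw.finrank_inf_eq_sum hx0, hy.finrank_inf_eq_sum hx0]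
  refine (sum_congr rfl fun i hi => ?_).le
  rw [if_neg (ne_of_lt (Fin.castSucc_lt_castSucc_iff.1 (mem_filter.1 hi).2)), Nat.sub_zero]

theorem isLocation_of_covers (hx : Monotone x) {m n : Fin N} (hmn : m < n) {μ : Fin N → ℕ}
    (hμm : 1 ≤ μ m) (hμn : 1 ≤ μ n) {y w z : Submodule F H} (hz : IsLocation x z μ)
    (hy : IsLocation x y
      (fun i => μ i - (if i = m then 1 else 0) - (if i = n then 1 else 0)))
    (hwy : Covers w y) (hzw : Covers z w) (hw : w ⊓ x n.castSucc ≤ y) :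
    IsLocation x w (fun i => μ i - if i = m then 1 else 0) := by
  refine ⟨fun i => (Nat.sub_le _ _).trans (hz.1 i), fun k => ?_⟩
  rcases lt_or_ge k n with hkn | hnk
  · have hxk : x k.succ ≤ x n.castSucc := hx (Fin.succ_le_castSucc_iff.2 hkn)
    have hwk : w ⊓ x k.succ = y ⊓ x k.succ :=
      le_antisymm (le_inf ((inf_le_inf_left w hxk).trans hw) inf_le_right)
        (inf_le_inf_right _ hwy.1)
    rw [hwk, hy.2 k]
    refine sum_congr rfl fun i hi => ?_
    dsimp only
    rw [if_neg (ne_of_lt ((mem_Iic.1 hi).trans_lt hkn)), Nat.sub_zero]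
  · have hyw_inf := finrank_inf_add_finrank_le_of_le hwy.1 (x k.succ)
    have hwz_inf := finrank_inf_add_finrank_le_of_le hzw.1 (x k.succ)
    have hsum_n := sum_tsub_ite_add_ite (Iic k) (f := fun i => μ i - if i = m then 1 else 0)
      (n := n) (by simp [hmn.ne', hμn])
    have hsum_m := sum_tsub_ite_add_ite (Iic k) hμm
    simp only [mem_Iic, hnk, hmn.le.trans hnk, if_true] at hsum_n hsum_m
    have hyk : finrank F ↥(y ⊓ x k.succ) = _ := hy.2 k
    have hzk := hz.2 k
    dsimp only at hyk hsum_n ⊢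
    have hwy_rank := hwy.2
    have hzw_rank := hzw.2
    omega

theorem isLocation_and_mcovers_iff (hx0 : x 0 = ⊥) (hx : Monotone x) {m n : Fin N} (hmn : m < n)
    {μ : Fin N → ℕ} (hμm : 1 ≤ μ m) (hμn : 1 ≤ μ n) {y z : Submodule F H}
    (hz : IsLocation x z μ)
    (hy : IsLocation x y
      (fun i => μ i - (if i = m then 1 else 0) - (if i = n then 1 else 0)))
    {u : H} (hux : u ∈ x n.castSucc) (huy : u ∉ y) (hzu : z ⊓ x n.castSucc ≤ y ⊔ F ∙ u)
    (w : Submodule F H) :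
    (IsLocation x w (fun i => μ i - if i = m then 1 else 0) ∧
      MCovers x n w y ∧ MCovers x m z w) ↔ (Covers w y ∧ Covers z w ∧ u ∉ w) := by
  constructor
  · rintro ⟨hw, hwy, hzw⟩
    refine ⟨hwy.1, hzw.1, fun huw => huy ?_⟩
    have hu : u ∈ w ⊓ x n.castSucc := ⟨huw, hux⟩
    rw [inf_castSucc_eq_of_isLocation hx0 hwy.1.1 hw hy] at hu
    exact hu.1
  · rintro ⟨hwy, hzw, huw⟩
    have hwn : w ⊓ x n.castSucc ≤ y := calc
      w ⊓ x n.castSucc = w ⊓ (z ⊓ x n.castSucc) := by rw [← inf_assoc, inf_eq_left.2 hzw.1]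
      _ ≤ w ⊓ (y ⊔ F ∙ u) := inf_le_inf_left w hzu
      _ = y := inf_sup_span_singleton_eq hwy.1 huw
    have hw := isLocation_of_covers hx hmn hμm hμn hz hy hwy hzw hwn
    have hνn : 1 ≤ μ n - if n = m then 1 else 0 := by simp [hmn.ne', hμn]
    exact ⟨hw, mcovers_of_isLocation hνn hwy hw hy, mcovers_of_isLocation hμm hzw hz hw⟩

end Location

theorem stmt4_general {F : Type*} [Field F] [Fintype F] {H : Type*} [AddCommGroup H] [Module F H]
    [FiniteDimensional F H] {N : ℕ} (hdim : Module.finrank F H = N)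
    (x : Fin (N + 1) → Submodule F H) (hrank : ∀ i, Module.finrank F ↥(x i) = (i : ℕ))
    (hmono : StrictMono x)
    (m n : Fin N) (hmn : m < n) (μ : Fin N → ℕ)
    (hμm : μ m = 1) (hμn : μ n = 1)
    (z y : Submodule F H) (hz : IsLocation x z μ)
    (hy : IsLocation x y
      (fun i => μ i - (if i = m then 1 else 0) - (if i = n then 1 else 0)))
    (hyz : y ≤ z) :
    Set.ncard {w : Submodule F H |
        IsLocation x w (fun i => μ i - if i = m then 1 else 0) ∧
          MCovers x n w y ∧ MCovers x m z w} = Fintype.card F := by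
  have hx0 : x 0 = ⊥ := finrank_eq_zero.1 (hrank 0)
  have hxtop : x (Fin.last N) = ⊤ := eq_top_of_finrank_eq (by rw [hrank, hdim, Fin.val_last])
  have hfinrank := hz.finrank_inf_eq_add hx0 hmn.ne hμm.ge hμn.ge hy
  have hzy : finrank F ↥z = finrank F ↥y + 2 := by
    have h := hfinrank (Fin.last N)
    rw [hxtop, inf_top_eq, inf_top_eq] at h
    simpa [Fin.castSucc_lt_last] using h
  have hzy_n : finrank F ↥(z ⊓ x n.castSucc) = finrank F ↥(y ⊓ x n.castSucc) + 1 := by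
    simpa [hmn] using hfinrank n.castSucc
  obtain ⟨u, hu, huy_n⟩ := SetLike.exists_of_lt <|
    lt_of_le_of_ne (inf_le_inf_right (x n.castSucc) hyz) fun h => by
      rw [h] at hzy_n
      omega
  have huy : u ∉ y := fun h => huy_n ⟨h, hu.2⟩
  have hzu : z ⊓ x n.castSucc ≤ y ⊔ F ∙ u := by
    rw [Covers.eq_sup_span_singleton ⟨inf_le_inf_right _ hyz, hzy_n.symm⟩ hu huy_n]
    exact sup_le_sup_right inf_le_left _
  rw [← ncard_covers_notMem hyz hzy hu.1 huy]
  congr 1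
  ext w
  exact isLocation_and_mcovers_iff hx0 hmono.monotone hmn hμm.ge hμn.ge hz hy hu.2 huy hzu w

/-- Given `z ∈ P_μ` and `y ∈ P_{μ - m̂ - n̂}` with `y ⊆ z` (where `m < n`, `μ_m = μ_n = 1`),
there are exactly `q` elements of `P_{μ - m̂}` which `n`-cover `y` and are `m`-covered by `z`. -/
theorem stmt4 {F : Type*} [Field F] [Fintype F] {H : Type*} [AddCommGroup H] [Module F H]
    [FiniteDimensional F H] {N : ℕ} (hN : 1 ≤ N) (hdim : Module.finrank F H = N)
    (x : Fin (N + 1) → Submodule F H) (hrank : ∀ i, Module.finrank F ↥(x i) = (i : ℕ))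
    (hmono : StrictMono x)
    (m n : Fin N) (hmn : m < n) (μ : Fin N → ℕ) (hμ : ∀ i, μ i ≤ 1)
    (hμm : μ m = 1) (hμn : μ n = 1)
    (z y : Submodule F H) (hz : IsLocation x z μ)
    (hy : IsLocation x y
      (fun i => μ i - (if i = m then 1 else 0) - (if i = n then 1 else 0)))
    (hyz : y ≤ z) :
    Set.ncard {w : Submodule F H |
        IsLocation x w (fun i => μ i - if i = m then 1 else 0) ∧
          MCovers x n w y ∧ MCovers x m z w} = Fintype.card F :=
  stmt4_general hdim x hrank hmono m n hmn μ hμm hμn z y hz hy hyz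
end

section
/- Let 1 ≤ m < n ≤ N and let μ ∈ {0,1}^N with μ_m = μ_n = 1. Given y ∈ P_{μ − m̂} and z ∈ P_{μ − n̂}: (a) if there exists a subspace covered by both y and z, then there exists a unique subspace that covers both y and z; (b) if there exists a subspace that covers both y and z, then there exists a unique subspace covered by both y and z. -/
/-!
Since `μ - m̂` and `μ - n̂` differ first at coordinate `m`, the subspaces `y` and `z` meet
`x_{m+1}` in different dimensions, so `y ≠ z`. The rest is lattice theory: in the modular
lattice of subspaces, two distinct elements with a common lower cover `w` meet in `w` and are
both covered by their join, and no other element covers both; dually for a common upper cover.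
-/

section CommonCover

variable {α : Type*} [Lattice α] {u y z : α}

theorem CovBy.sup_eq_of_ne (hy : y ⋖ u) (hz : z ⋖ u) (hyz : y ≠ z) : y ⊔ z = u := by
  have hzy : ¬z ≤ y := fun h => hz.2 (lt_of_le_of_ne h hyz.symm) hy.lt
  exact (hy.wcovBy.eq_or_eq le_sup_left (sup_le hy.le hz.le)).resolve_left
    fun h => hzy (h ▸ le_sup_right)

theorem CovBy.inf_eq_of_ne (hy : u ⋖ y) (hz : u ⋖ z) (hyz : y ≠ z) : y ⊓ z = u :=
  CovBy.sup_eq_of_ne (α := αᵒᵈ) hy.toDual hz.toDual hyz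

end CommonCover

theorem Finset.sum_tsub_ite_eq_one {ι : Type*} [DecidableEq ι] (s : Finset ι) (f : ι → ℕ) (k : ι)
    (hk : k ∈ s → 1 ≤ f k) :
    ∑ i ∈ s, (f i - if i = k then 1 else 0) = ∑ i ∈ s, f i - if k ∈ s then 1 else 0 := by
  rw [Finset.sum_tsub_distrib s fun i hi => ?_, Finset.sum_ite_eq' s k fun _ => 1]
  split_ifs with hik
  · subst hik
    exact hk hi
  · exact Nat.zero_le _

section Covers

variable {F H : Type*} [Field F] [AddCommGroup H] [Module F H] {u w y z : Submodule F H}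

theorem Covers.finiteDimensional (h : Covers u w) : FiniteDimensional F u :=
  Module.finite_of_finrank_pos (h.2 ▸ Nat.succ_pos _)

theorem Covers.covBy (h : Covers u w) : w ⋖ u := by
  have := h.finiteDimensional
  have hrank := h.2
  refine ⟨lt_of_le_of_ne h.1 fun hwu => by subst hwu; omega, fun v hwv hvu => ?_⟩
  have := Submodule.finiteDimensional_of_le hvu.le
  have := Submodule.finrank_lt_finrank_of_lt hwv
  have := Submodule.finrank_lt_finrank_of_lt hvu
  omega

theorem CovBy.covers [FiniteDimensional F u] (h : w ⋖ u) : Covers u w := by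
  have := Submodule.finiteDimensional_of_le h.le
  obtain ⟨v, hvu, hvw⟩ := SetLike.exists_of_lt h.lt
  have hv : v ≠ 0 := fun hv => hvw (hv ▸ w.zero_mem)
  have hspan : F ∙ v ⊔ w = u :=
    (h.wcovBy.eq_or_eq le_sup_right
      (sup_le ((Submodule.span_singleton_le_iff_mem v u).2 hvu) h.le)).resolve_left
      (Submodule.covBy_span_singleton_sup hvw).ne'
  have hle := Submodule.finrank_add_le_finrank_add_finrank (F ∙ v) w
  rw [hspan, finrank_span_singleton hv] at hle
  have := Submodule.finrank_lt_finrank_of_lt h.lt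
  exact ⟨h.le, by omega⟩

theorem existsUnique_covers_of_covers_of_ne (hy : Covers y w) (hz : Covers z w) (hyz : y ≠ z) :
    ∃! u, Covers u y ∧ Covers u z := by
  have := hy.finiteDimensional
  have := hz.finiteDimensional
  have hinf : y ⊓ z = w := hy.covBy.inf_eq_of_ne hz.covBy hyz
  refine ⟨y ⊔ z, ⟨?_, ?_⟩, fun u hu => (hu.1.covBy.sup_eq_of_ne hu.2.covBy hyz).symm⟩
  · exact (covBy_sup_of_inf_covBy_right (hinf ▸ hz.covBy)).covers
  · exact (covBy_sup_of_inf_covBy_left (hinf ▸ hy.covBy)).covers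

theorem existsUnique_covered_of_covers_of_ne (hy : Covers u y) (hz : Covers u z) (hyz : y ≠ z) :
    ∃! w, Covers y w ∧ Covers z w := by
  have := hy.finiteDimensional
  have := Submodule.finiteDimensional_of_le hy.1
  have := Submodule.finiteDimensional_of_le hz.1
  have hsup : y ⊔ z = u := hy.covBy.sup_eq_of_ne hz.covBy hyz
  refine ⟨y ⊓ z, ⟨?_, ?_⟩, fun w hw => (hw.1.covBy.inf_eq_of_ne hw.2.covBy hyz).symm⟩
  · exact (inf_covBy_of_covBy_sup_right (hsup ▸ hz.covBy)).covers
  · exact (inf_covBy_of_covBy_sup_left (hsup ▸ hy.covBy)).covers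

theorem IsLocation.ne_of_tsub_single {N : ℕ} {x : Fin (N + 1) → Submodule F H} {μ : Fin N → ℕ}
    {m n : Fin N} (hmn : m < n) (hμm : μ m = 1)
    (hy : IsLocation x y (fun i => μ i - if i = m then 1 else 0))
    (hz : IsLocation x z (fun i => μ i - if i = n then 1 else 0)) : y ≠ z := by
  rintro rfl
  have h := (hy.2 m).symm.trans (hz.2 m)
  rw [Finset.sum_tsub_ite_eq_one _ _ _ fun _ => hμm.ge,
    Finset.sum_tsub_ite_eq_one _ _ _ fun hn => absurd (Finset.mem_Iic.1 hn) hmn.not_ge] at h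
  have hpos : 1 ≤ ∑ i ∈ Finset.Iic m, μ i :=
    hμm ▸ Finset.single_le_sum (fun _ _ => Nat.zero_le _) (Finset.mem_Iic.2 le_rfl)
  simp only [Finset.mem_Iic, le_refl, if_true, hmn.not_ge, if_false] at h
  omega

end Covers

theorem stmt5_general {F : Type*} [Field F] {H : Type*} [AddCommGroup H] [Module F H]
    {N : ℕ} (x : Fin (N + 1) → Submodule F H)
    (m n : Fin N) (hmn : m < n) (μ : Fin N → ℕ)
    (hμm : μ m = 1)
    (y z : Submodule F H)
    (hy : IsLocation x y (fun i => μ i - if i = m then 1 else 0))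
    (hz : IsLocation x z (fun i => μ i - if i = n then 1 else 0)) :
    ((∃ w : Submodule F H, Covers y w ∧ Covers z w) →
        ∃! w' : Submodule F H, Covers w' y ∧ Covers w' z) ∧
      ((∃ w' : Submodule F H, Covers w' y ∧ Covers w' z) →
        ∃! w : Submodule F H, Covers y w ∧ Covers z w) := by
  have hyz := IsLocation.ne_of_tsub_single hmn hμm hy hz
  exact ⟨fun ⟨_, hyw, hzw⟩ => existsUnique_covers_of_covers_of_ne hyw hzw hyz,
    fun ⟨_, hwy, hwz⟩ => existsUnique_covered_of_covers_of_ne hwy hwz hyz⟩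

/-- Given `y ∈ P_{μ - m̂}` and `z ∈ P_{μ - n̂}` (where `m < n`, `μ_m = μ_n = 1`):
(a) if some subspace is covered by both `y` and `z`, then there is a unique subspace
covering both `y` and `z`; (b) if some subspace covers both `y` and `z`, then there is a
unique subspace covered by both `y` and `z`. -/
theorem stmt5 {F : Type*} [Field F] [Fintype F] {H : Type*} [AddCommGroup H] [Module F H]
    [FiniteDimensional F H] {N : ℕ} (hN : 1 ≤ N) (hdim : Module.finrank F H = N)
    (x : Fin (N + 1) → Submodule F H) (hrank : ∀ i, Module.finrank F ↥(x i) = (i : ℕ))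
    (hmono : StrictMono x)
    (m n : Fin N) (hmn : m < n) (μ : Fin N → ℕ) (hμ : ∀ i, μ i ≤ 1)
    (hμm : μ m = 1) (hμn : μ n = 1)
    (y z : Submodule F H)
    (hy : IsLocation x y (fun i => μ i - if i = m then 1 else 0))
    (hz : IsLocation x z (fun i => μ i - if i = n then 1 else 0)) :
    ((∃ w : Submodule F H, Covers y w ∧ Covers z w) →
        ∃! w' : Submodule F H, Covers w' y ∧ Covers w' z) ∧
      ((∃ w' : Submodule F H, Covers w' y ∧ Covers w' z) →
        ∃! w : Submodule F H, Covers y w ∧ Covers z w) :=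
  stmt5_general x m n hmn μ hμm y z hy hz
end

section
/- Let μ ∈ {0,1}^N and let π₁ ⊆ S_μ, π₂ ⊆ T_μ. The following are equivalent: (i) there exists a rook placement σ on B_μ with row index set π₁ and column index set π₂; (ii) |π₁| = |π₂|, and for each 1 ≤ i ≤ |π₁| the i-th smallest element of π₁ is strictly smaller than the i-th smallest element of π₂. -/
/-!
A rook placement matches each row index `x` injectively to a column index `> x`, so for every
`a` there are at least as many column indices `> a` as row indices `≥ a`. Taking `a` to be the
`i`-th smallest row index `s_i`, there are `k - i` row indices `≥ s_i`, whereas if the `i`-th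
smallest column index `t_i` were `≤ s_i` there would be at most `k - 1 - i` column indices
`> s_i`. Conversely, under interlacing the rooks `(s_j, t_j)` form a placement.
-/

def Sset {N : ℕ} (μ : Fin N → ℕ) : Finset (Fin N) :=
  Finset.univ.filter fun s => μ s = 0

def Tset {N : ℕ} (μ : Fin N → ℕ) : Finset (Fin N) :=
  Finset.univ.filter fun t => μ t = 1

def Board {N : ℕ} (μ : Fin N → ℕ) : Finset (Fin N × Fin N) :=
  (Sset μ ×ˢ Tset μ).filter fun p => p.1 < p.2

def IsRookPlacement {N : ℕ} (μ : Fin N → ℕ) (σ : Finset (Fin N × Fin N)) : Prop :=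
  σ ⊆ Board μ ∧ (∀ p ∈ σ, ∀ p' ∈ σ, p.1 = p'.1 → p = p') ∧
    (∀ p ∈ σ, ∀ p' ∈ σ, p.2 = p'.2 → p = p')

def rows {N : ℕ} (σ : Finset (Fin N × Fin N)) : Finset (Fin N) := σ.image Prod.fst

def cols {N : ℕ} (σ : Finset (Fin N × Fin N)) : Finset (Fin N) := σ.image Prod.snd

def Interlacing {N : ℕ} (π₁ π₂ : Finset (Fin N)) : Prop :=
  ∃ h : π₁.card = π₂.card,
    ∀ i : Fin π₁.card,
      (↑(π₁.orderIsoOfFin rfl i) : Fin N) < (↑(π₂.orderIsoOfFin h.symm i) : Fin N)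

open Finset

section LinearOrder

variable {α : Type*} [LinearOrder α]

theorem Finset.card_filter_orderEmbOfFin_le (s : Finset α) {k : ℕ} (h : s.card = k) (i : Fin k) :
    #{x ∈ s | s.orderEmbOfFin h i ≤ x} = k - i := by
  have hmap := s.map_orderEmbOfFin_univ h
  generalize s.orderEmbOfFin h = e at hmap ⊢
  subst hmap
  simp [filter_map, filter_le_eq_Ici]

theorem Finset.card_filter_orderEmbOfFin_lt (s : Finset α) {k : ℕ} (h : s.card = k) (i : Fin k) :
    #{x ∈ s | s.orderEmbOfFin h i < x} = k - 1 - i := by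
  have hmap := s.map_orderEmbOfFin_univ h
  generalize s.orderEmbOfFin h = e at hmap ⊢
  subst hmap
  simp [filter_map, filter_lt_eq_Ioi]

theorem Finset.orderEmbOfFin_lt_of_card_filter_le {s t : Finset α} {k : ℕ} (hs : s.card = k)
    (ht : t.card = k) (hcount : ∀ a, #{x ∈ s | a ≤ x} ≤ #{y ∈ t | a < y}) (i : Fin k) :
    s.orderEmbOfFin hs i < t.orderEmbOfFin ht i := by
  by_contra! hle
  have hsub : {y ∈ t | s.orderEmbOfFin hs i < y} ⊆ {y ∈ t | t.orderEmbOfFin ht i < y} :=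
    monotone_filter_right t fun _ _ => hle.trans_lt
  have := (hcount (s.orderEmbOfFin hs i)).trans (card_le_card hsub)
  rw [card_filter_orderEmbOfFin_le, card_filter_orderEmbOfFin_lt] at this
  omega

theorem card_filter_image_fst_le_card_filter_image_snd {σ : Finset (α × α)}
    (hsnd : Set.InjOn Prod.snd (σ : Set (α × α))) (hlt : ∀ p ∈ σ, p.1 < p.2) (a : α) :
    #{x ∈ σ.image Prod.fst | a ≤ x} ≤ #{y ∈ σ.image Prod.snd | a < y} := by
  rw [filter_image, filter_image, card_image_of_injOn (hsnd.mono (filter_subset _ _))]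
  calc #(image Prod.fst {p ∈ σ | a ≤ p.1})
      _ ≤ #{p ∈ σ | a ≤ p.1} := card_image_le
      _ ≤ #{p ∈ σ | a < p.2} :=
        card_le_card (monotone_filter_right σ fun p hp ha => ha.trans_lt (hlt p hp))

end LinearOrder

theorem interlacing_rows_cols {N : ℕ} {μ : Fin N → ℕ} {σ : Finset (Fin N × Fin N)}
    (hσ : IsRookPlacement μ σ) : Interlacing (rows σ) (cols σ) := by
  obtain ⟨hboard, hrow, hcol⟩ := hσ
  have hfst : Set.InjOn Prod.fst (σ : Set (Fin N × Fin N)) := fun p hp q hq => hrow p hp q hq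
  have hsnd : Set.InjOn Prod.snd (σ : Set (Fin N × Fin N)) := fun p hp q hq => hcol p hp q hq
  have hlt : ∀ p ∈ σ, p.1 < p.2 := fun p hp => (mem_filter.mp (hboard hp)).2
  have hcard : (rows σ).card = (cols σ).card := by
    rw [rows, cols, card_image_of_injOn hfst, card_image_of_injOn hsnd]
  exact ⟨hcard, orderEmbOfFin_lt_of_card_filter_le rfl hcard.symm
    (card_filter_image_fst_le_card_filter_image_snd hsnd hlt)⟩

theorem exists_isRookPlacement_of_interlacing {N : ℕ} {μ : Fin N → ℕ} {π₁ π₂ : Finset (Fin N)}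
    (h₁ : π₁ ⊆ Sset μ) (h₂ : π₂ ⊆ Tset μ) (h : Interlacing π₁ π₂) :
    ∃ σ : Finset (Fin N × Fin N), IsRookPlacement μ σ ∧ rows σ = π₁ ∧ cols σ = π₂ := by
  obtain ⟨hcard, hlt⟩ := h
  set s := π₁.orderEmbOfFin rfl
  set t := π₂.orderEmbOfFin hcard.symm
  have hs : ∀ i j, s i = s j → (s i, t i) = (s j, t j) := fun i j hij => by
    rw [s.injective hij]
  have ht : ∀ i j, t i = t j → (s i, t i) = (s j, t j) := fun i j hij => by
    rw [t.injective hij]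
  refine ⟨univ.image fun j => (s j, t j), ⟨?_, ?_, ?_⟩, ?_, ?_⟩
  · simp only [subset_iff, mem_image, mem_univ, true_and, forall_exists_index,
      forall_apply_eq_imp_iff]
    exact fun j => mem_filter.mpr
      ⟨mem_product.mpr ⟨h₁ (π₁.orderEmbOfFin_mem rfl j), h₂ (π₂.orderEmbOfFin_mem _ j)⟩, hlt j⟩
  · simpa only [mem_image, mem_univ, true_and, forall_exists_index, forall_apply_eq_imp_iff]
      using hs
  · simpa only [mem_image, mem_univ, true_and, forall_exists_index, forall_apply_eq_imp_iff]
      using ht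
  · rw [rows, image_image]
    exact π₁.image_orderEmbOfFin_univ rfl
  · rw [cols, image_image]
    exact π₂.image_orderEmbOfFin_univ hcard.symm

theorem stmt6_general {N : ℕ} (μ : Fin N → ℕ)
    (π₁ π₂ : Finset (Fin N)) (h₁ : π₁ ⊆ Sset μ) (h₂ : π₂ ⊆ Tset μ) :
    (∃ σ : Finset (Fin N × Fin N), IsRookPlacement μ σ ∧ rows σ = π₁ ∧ cols σ = π₂) ↔
      Interlacing π₁ π₂ := by
  constructor
  · rintro ⟨σ, hσ, rfl, rfl⟩
    exact interlacing_rows_cols hσ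
  · exact exists_isRookPlacement_of_interlacing h₁ h₂

/-- For `π₁ ⊆ S_μ` and `π₂ ⊆ T_μ`: there is a rook placement on `B_μ` with row index set
`π₁` and column index set `π₂` iff `(π₁, π₂)` satisfies the interlacing condition. -/
theorem stmt6 {N : ℕ} (hN : 1 ≤ N) (μ : Fin N → ℕ) (hμ : ∀ i, μ i ≤ 1)
    (π₁ π₂ : Finset (Fin N)) (h₁ : π₁ ⊆ Sset μ) (h₂ : π₂ ⊆ Tset μ) :
    (∃ σ : Finset (Fin N × Fin N), IsRookPlacement μ σ ∧ rows σ = π₁ ∧ cols σ = π₂) ↔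
      Interlacing π₁ π₂ :=
  stmt6_general μ π₁ π₂ h₁ h₂
end

section
/- Let μ ∈ {0,1}^N and λ ⊆ {1,…,N}. The following are equivalent: (i) there exists a rook placement on B_μ of type λ; (ii) the pair (λ ∩ S_μ, λ ∩ T_μ) satisfies the interlacing condition. -/
/-! A rook placement is a matching of its rows with its columns in which each row precedes its
column, and since `S_μ` and `T_μ` partition `{1, …, N}` the type `λ` of such a matching determines
its rows `λ ∩ S_μ` and columns `λ ∩ T_μ`. So it suffices that two equinumerous sets `A`, `B` admit
such a matching iff they interlace. Pairing the `i`-th smallest elements gives the matching.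
Conversely, if `b_i ≤ a_i`, the `i + 1` columns `≤ b_i` are matched with `i + 1` distinct rows
`< a_i`, yet only `i` elements of `A` lie below `a_i`. -/

open Finset

section
variable {α : Type*} [LinearOrder α]

def IsAscendingMatching (σ : Finset (α × α)) : Prop :=
  Set.InjOn Prod.fst (σ : Set (α × α)) ∧ Set.InjOn Prod.snd (σ : Set (α × α)) ∧
    ∀ p ∈ σ, p.1 < p.2

namespace Finset

theorem filter_eq_map_orderEmbOfFin (s : Finset α) {k : ℕ} (h : #s = k) (p : α → Prop)
    [DecidablePred p] :
    {x ∈ s | p x} =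
      ({j | p (s.orderEmbOfFin h j)} : Finset (Fin k)).map (s.orderEmbOfFin h).toEmbedding := by
  ext x
  simp only [mem_filter, mem_map, mem_univ, true_and, RelEmbedding.coe_toEmbedding]
  constructor
  · rintro ⟨hx, hpx⟩
    rw [← mem_coe, ← range_orderEmbOfFin s h] at hx
    obtain ⟨j, rfl⟩ := hx
    exact ⟨j, hpx, rfl⟩
  · rintro ⟨j, hpj, rfl⟩
    exact ⟨orderEmbOfFin_mem s h j, hpj⟩

theorem card_filter_lt_orderEmbOfFin (s : Finset α) {k : ℕ} (h : #s = k) (i : Fin k) :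
    #{x ∈ s | x < s.orderEmbOfFin h i} = i := by
  simp [filter_eq_map_orderEmbOfFin s h, filter_gt_eq_Iio]

theorem card_filter_le_orderEmbOfFin (s : Finset α) {k : ℕ} (h : #s = k) (i : Fin k) :
    #{x ∈ s | x ≤ s.orderEmbOfFin h i} = i + 1 := by
  simp [filter_eq_map_orderEmbOfFin s h, filter_ge_eq_Iic]

end Finset

theorem IsAscendingMatching.orderEmbOfFin_image_fst_lt {σ : Finset (α × α)}
    (hσ : IsAscendingMatching σ) (h : #(σ.image Prod.fst) = #(σ.image Prod.snd))
    (i : Fin #(σ.image Prod.fst)) :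
    (σ.image Prod.fst).orderEmbOfFin rfl i < (σ.image Prod.snd).orderEmbOfFin h.symm i := by
  set a := (σ.image Prod.fst).orderEmbOfFin rfl i
  set b := (σ.image Prod.snd).orderEmbOfFin h.symm i
  by_contra! hba
  obtain ⟨hfst, -, hlt⟩ := hσ
  have hsub : {p ∈ σ | p.2 ≤ b} ⊆ {p ∈ σ | p.1 < a} := fun p hp => by
    rw [mem_filter] at hp ⊢
    exact ⟨hp.1, (hlt p hp.1).trans_le (hp.2.trans hba)⟩
  have := calc
    (i : ℕ) + 1 = #{y ∈ σ.image Prod.snd | y ≤ b} := (card_filter_le_orderEmbOfFin ..).symm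
    _ ≤ #{p ∈ σ | p.2 ≤ b} := by rw [filter_image]; exact card_image_le
    _ ≤ #{p ∈ σ | p.1 < a} := card_le_card hsub
    _ = #{x ∈ σ.image Prod.fst | x < a} := by
      rw [filter_image, card_image_of_injOn (hfst.mono (coe_subset.2 (filter_subset _ _)))]
    _ = i := card_filter_lt_orderEmbOfFin ..
  omega

theorem exists_isAscendingMatching_of_orderEmbOfFin_lt {A B : Finset α} (h : #A = #B)
    (hlt : ∀ i, A.orderEmbOfFin rfl i < B.orderEmbOfFin h.symm i) :
    ∃ σ : Finset (α × α), IsAscendingMatching σ ∧ σ.image Prod.fst = A ∧ σ.image Prod.snd = B := by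
  set eA := A.orderEmbOfFin rfl
  set eB := B.orderEmbOfFin h.symm
  refine ⟨univ.image fun i => (eA i, eB i), ⟨?_, ?_, ?_⟩, ?_, ?_⟩
  · simp [Set.InjOn, eA.injective.eq_iff]
  · simp [Set.InjOn, eB.injective.eq_iff]
  · simpa using hlt
  · simp [image_image, Function.comp_def, eA, image_orderEmbOfFin_univ]
  · simp [image_image, Function.comp_def, eB, image_orderEmbOfFin_univ]

end

theorem interlacing_iff_exists_isAscendingMatching {N : ℕ} (A B : Finset (Fin N)) :
    Interlacing A B ↔ ∃ σ, IsAscendingMatching σ ∧ rows σ = A ∧ cols σ = B := by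
  simp only [Interlacing, coe_orderIsoOfFin_apply]
  constructor
  · rintro ⟨h, hlt⟩
    exact exists_isAscendingMatching_of_orderEmbOfFin_lt h hlt
  · rintro ⟨σ, hσ, rfl, rfl⟩
    have h : #(rows σ) = #(cols σ) := by
      rw [rows, cols, card_image_of_injOn hσ.1, card_image_of_injOn hσ.2.1]
    exact ⟨h, hσ.orderEmbOfFin_image_fst_lt h⟩

theorem isRookPlacement_iff {N : ℕ} (μ : Fin N → ℕ) (σ : Finset (Fin N × Fin N)) :
    IsRookPlacement μ σ ↔ IsAscendingMatching σ ∧ rows σ ⊆ Sset μ ∧ cols σ ⊆ Tset μ := by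
  simp only [IsRookPlacement, IsAscendingMatching, Board, rows, cols, subset_iff, mem_filter,
    mem_product, mem_image, Set.InjOn, mem_coe]
  constructor
  · rintro ⟨hB, hfst, hsnd⟩
    refine ⟨⟨hfst, hsnd, fun p hp => (hB hp).2⟩, ?_, ?_⟩ <;>
    · rintro x ⟨p, hp, rfl⟩
      simp [(hB hp).1]
  · rintro ⟨⟨hfst, hsnd, hlt⟩, hS, hT⟩
    exact ⟨fun p hp => ⟨⟨hS ⟨p, hp, rfl⟩, hT ⟨p, hp, rfl⟩⟩, hlt p hp⟩, hfst, hsnd⟩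

theorem Finset.union_eq_iff_of_disjoint {α : Type*} [DecidableEq α] {S T s t u : Finset α}
    (hST : Disjoint S T) (hu : u ⊆ S ∪ T) (hs : s ⊆ S) (ht : t ⊆ T) :
    s ∪ t = u ↔ s = u ∩ S ∧ t = u ∩ T := by
  constructor
  · rintro rfl
    rw [union_inter_distrib_right, union_inter_distrib_right, inter_eq_left.2 hs,
      inter_eq_left.2 ht, disjoint_iff_inter_eq_empty.1 (disjoint_of_subset_left ht hST.symm),
      disjoint_iff_inter_eq_empty.1 (disjoint_of_subset_left hs hST), union_empty, empty_union]
    exact ⟨rfl, rfl⟩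
  · rintro ⟨rfl, rfl⟩
    rw [← inter_union_distrib_left, inter_eq_left.2 hu]

theorem stmt7_general {N : ℕ} (μ : Fin N → ℕ) (hμ : ∀ i, μ i ≤ 1)
    (lam : Finset (Fin N)) :
    (∃ σ : Finset (Fin N × Fin N), IsRookPlacement μ σ ∧ rows σ ∪ cols σ = lam) ↔
      Interlacing (lam ∩ Sset μ) (lam ∩ Tset μ) := by
  have hST : Disjoint (Sset μ) (Tset μ) :=
    disjoint_filter.2 fun i _ h0 h1 => by omega
  have hlam : lam ⊆ Sset μ ∪ Tset μ := fun i _ => by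
    have := hμ i
    simp only [Sset, Tset, mem_union, mem_filter, mem_univ, true_and]
    omega
  rw [interlacing_iff_exists_isAscendingMatching]
  refine exists_congr fun σ => ?_
  rw [isRookPlacement_iff]
  constructor
  · rintro ⟨⟨hσ, hS, hT⟩, htype⟩
    exact ⟨hσ, (union_eq_iff_of_disjoint hST hlam hS hT).1 htype⟩
  · rintro ⟨hσ, hS, hT⟩
    refine ⟨⟨hσ, hS ▸ inter_subset_right, hT ▸ inter_subset_right⟩, ?_⟩
    rw [hS, hT, ← inter_union_distrib_left, inter_eq_left.2 hlam]

/-- There is a rook placement on `B_μ` of type `λ` iff `(λ ∩ S_μ, λ ∩ T_μ)` satisfies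
the interlacing condition. -/
theorem stmt7 {N : ℕ} (hN : 1 ≤ N) (μ : Fin N → ℕ) (hμ : ∀ i, μ i ≤ 1)
    (lam : Finset (Fin N)) :
    (∃ σ : Finset (Fin N × Fin N), IsRookPlacement μ σ ∧ rows σ ∪ cols σ = lam) ↔
      Interlacing (lam ∩ Sset μ) (lam ∩ Tset μ) :=
  stmt7_general μ hμ lam
end

section
/- For λ ⊆ {1,…,N}, the following are equivalent: (i) there exists μ ∈ {0,1}^N and a rook placement on B_μ of type λ; (ii) the cardinality of λ is even. -/
/-
The rows of a rook placement lie in `S_μ` and its columns in `T_μ`, which are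
disjoint, and both projections are injective, so a placement with `k` rooks has type of size
`2k`. Conversely, any two points `a < b` outside a type can be added to it by placing a rook
at `(a, b)` after setting `μ_a = 0` and `μ_b = 1`, so every set of even size is a type.
-/

namespace RookPlacement

variable {N : ℕ}

theorem mem_board {μ : Fin N → ℕ} {p : Fin N × Fin N} :
    p ∈ Board μ ↔ μ p.1 = 0 ∧ μ p.2 = 1 ∧ p.1 < p.2 := by
  simp [Board, Sset, Tset, and_assoc]

theorem mem_rows {σ : Finset (Fin N × Fin N)} {s : Fin N} :
    s ∈ rows σ ↔ ∃ t, (s, t) ∈ σ := by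
  simp [rows]

theorem mem_cols {σ : Finset (Fin N × Fin N)} {t : Fin N} :
    t ∈ cols σ ↔ ∃ s, (s, t) ∈ σ := by
  simp [cols]

theorem disjoint_rows_cols {μ : Fin N → ℕ} {σ : Finset (Fin N × Fin N)}
    (hσ : σ ⊆ Board μ) : Disjoint (rows σ) (cols σ) := by
  refine Finset.disjoint_left.2 fun x hrow hcol => ?_
  obtain ⟨t, hxt⟩ := mem_rows.1 hrow
  obtain ⟨s, hsx⟩ := mem_cols.1 hcol
  have h0 : μ x = 0 := (mem_board.1 (hσ hxt)).1
  have h1 : μ x = 1 := (mem_board.1 (hσ hsx)).2.1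
  omega

theorem card_type {μ : Fin N → ℕ} {σ : Finset (Fin N × Fin N)} (hσ : IsRookPlacement μ σ) :
    (rows σ ∪ cols σ).card = 2 * σ.card := by
  obtain ⟨hboard, hrow, hcol⟩ := hσ
  rw [Finset.card_union_of_disjoint (disjoint_rows_cols hboard), rows, cols,
    Finset.card_image_of_injOn fun p hp q hq => hrow p hp q hq,
    Finset.card_image_of_injOn fun p hp q hq => hcol p hp q hq, two_mul]

def IsRookType (lam : Finset (Fin N)) : Prop :=
  ∃ μ : Fin N → ℕ, (∀ i, μ i ≤ 1) ∧
    ∃ σ : Finset (Fin N × Fin N), IsRookPlacement μ σ ∧ rows σ ∪ cols σ = lam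

theorem isRookType_empty : IsRookType (∅ : Finset (Fin N)) :=
  ⟨fun _ => 0, fun _ => zero_le_one, ∅, ⟨by simp, by simp, by simp⟩, by simp [rows, cols]⟩

theorem IsRookType.insert_insert {lam : Finset (Fin N)} (h : IsRookType lam) {a b : Fin N}
    (hab : a < b) (ha : a ∉ lam) (hb : b ∉ lam) : IsRookType (insert a (insert b lam)) := by
  obtain ⟨μ, hμ, σ, ⟨hboard, hrow, hcol⟩, rfl⟩ := h
  have hoff : ∀ p ∈ σ, p.1 ≠ a ∧ p.1 ≠ b ∧ p.2 ≠ a ∧ p.2 ≠ b := by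
    intro p hp
    have h1 : p.1 ∈ rows σ := mem_rows.2 ⟨p.2, hp⟩
    have h2 : p.2 ∈ cols σ := mem_cols.2 ⟨p.1, hp⟩
    simp only [Finset.mem_union, not_or] at ha hb
    exact ⟨ne_of_mem_of_not_mem h1 ha.1, ne_of_mem_of_not_mem h1 hb.1,
      ne_of_mem_of_not_mem h2 ha.2, ne_of_mem_of_not_mem h2 hb.2⟩
  set ν := Function.update (Function.update μ b 1) a 0
  have hν : ∀ i, i ≠ a → i ≠ b → ν i = μ i := fun i hia hib => by
    simp [ν, Function.update_of_ne hia, Function.update_of_ne hib]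
  refine ⟨ν, fun i => ?_, insert (a, b) σ, ⟨?_, ?_, ?_⟩, ?_⟩
  · by_cases hia : i = a
    · simp [ν, hia]
    by_cases hib : i = b
    · simp [ν, hib, hab.ne']
    · simpa [hν i hia hib] using hμ i
  · refine Finset.insert_subset ?_ fun p hp => ?_
    · exact mem_board.2 ⟨by simp [ν], by simp [ν, hab.ne'], hab⟩
    · obtain ⟨h1a, h1b, h2a, h2b⟩ := hoff p hp
      obtain ⟨hp1, hp2, hlt⟩ := mem_board.1 (hboard hp)
      exact mem_board.2 ⟨hν _ h1a h1b ▸ hp1, hν _ h2a h2b ▸ hp2, hlt⟩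
  · simp only [Finset.mem_insert]
    rintro p (rfl | hp) q (rfl | hq) he
    exacts [rfl, absurd he.symm (hoff q hq).1, absurd he (hoff p hp).1, hrow p hp q hq he]
  · simp only [Finset.mem_insert]
    rintro p (rfl | hp) q (rfl | hq) he
    exacts [rfl, absurd he.symm (hoff q hq).2.2.2, absurd he (hoff p hp).2.2.2,
      hcol p hp q hq he]
  · ext x
    simp only [rows, cols, Finset.image_insert, Finset.mem_union, Finset.mem_insert]
    tauto

theorem isRookType_of_card_eq (k : ℕ) :
    ∀ lam : Finset (Fin N), lam.card = 2 * k → IsRookType lam := by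
  induction k with
  | zero => simp [isRookType_empty]
  | succ k ih =>
    intro lam hcard
    obtain ⟨a, ha⟩ := Finset.card_pos.1 (by omega : 0 < lam.card)
    obtain ⟨b, hb⟩ := Finset.card_pos.1
      (by rw [Finset.card_erase_of_mem ha]; omega : 0 < (lam.erase a).card)
    have hba : b ≠ a := Finset.ne_of_mem_erase hb
    set rest := (lam.erase a).erase b
    have hrest : IsRookType rest := ih rest <| by
      rw [Finset.card_erase_of_mem hb, Finset.card_erase_of_mem ha]; omega
    have hlam : lam = insert a (insert b rest) := by
      rw [Finset.insert_erase hb, Finset.insert_erase ha]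
    have ha' : a ∉ rest := fun h => Finset.notMem_erase a _ (Finset.mem_of_mem_erase h)
    have hb' : b ∉ rest := Finset.notMem_erase b _
    rcases lt_or_gt_of_ne hba with hlt | hlt
    · rw [hlam, Finset.insert_comm]
      exact hrest.insert_insert hlt hb' ha'
    · rw [hlam]
      exact hrest.insert_insert hlt ha' hb'

end RookPlacement

theorem stmt8_general {N : ℕ} (lam : Finset (Fin N)) :
    (∃ μ : Fin N → ℕ, (∀ i, μ i ≤ 1) ∧
        ∃ σ : Finset (Fin N × Fin N), IsRookPlacement μ σ ∧ rows σ ∪ cols σ = lam) ↔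
      Even lam.card := by
  constructor
  · rintro ⟨μ, -, σ, hσ, rfl⟩
    exact ⟨σ.card, by rw [RookPlacement.card_type hσ, two_mul]⟩
  · rintro ⟨k, hk⟩
    exact RookPlacement.isRookType_of_card_eq k lam (by omega)

/-- There exist `μ ∈ {0,1}^N` and a rook placement on `B_μ` of type `λ` iff `|λ|` is even. -/
theorem stmt8 {N : ℕ} (hN : 1 ≤ N) (lam : Finset (Fin N)) :
    (∃ μ : Fin N → ℕ, (∀ i, μ i ≤ 1) ∧
        ∃ σ : Finset (Fin N × Fin N), IsRookPlacement μ σ ∧ rows σ ∪ cols σ = lam) ↔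
      Even lam.card :=
  stmt8_general lam
end

section
/- Let μ ∈ {0,1}^N and let λ ⊆ {1,…,N} be such that (λ ∩ S_μ, λ ∩ T_μ) satisfies the interlacing condition. Then for every 1 ≤ m ≤ N and every rook placement σ on B_μ of type λ, |σ ∩ (S_μ(m) × T_μ(m))| = |λ ∩ S_μ(m)| + |λ ∩ T_μ(m)| − |λ|/2. In particular this number is independent of the choice of σ. -/
/-- `S_μ(m) = {s ∈ S_μ : s ≤ m}`. -/
def SsetLe {N : ℕ} (μ : Fin N → ℕ) (m : Fin N) : Finset (Fin N) :=
  (Sset μ).filter fun s => s ≤ m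

/-- `T_μ(m) = {t ∈ T_μ : t ≥ m}`. -/
def TsetGe {N : ℕ} (μ : Fin N → ℕ) (m : Fin N) : Finset (Fin N) :=
  (Tset μ).filter fun t => m ≤ t


/-!
Every rook `(s, t)` has `s < t`, so for each `m` it lies in row `≤ m` or in column `≥ m`.
Hence, with `A` the rooks in rows `≤ m` and `B` the rooks in columns `≥ m`, the rooks in
`S_μ(m) × T_μ(m)` are `A ∩ B` and `|A ∩ B| = |A| + |B| - |σ|`. Rooks occupy distinct rows
and distinct columns, and rows lie in `S_μ` while columns lie in `T_μ`, so
`|A| = |λ ∩ S_μ(m)|`, `|B| = |λ ∩ T_μ(m)|` and `|λ| = 2|σ|`.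
-/

section Board

variable {N : ℕ} {μ : Fin N → ℕ}

@[simp]
theorem mem_Sset {s : Fin N} : s ∈ Sset μ ↔ μ s = 0 := by
  simp [Sset]

@[simp]
theorem mem_Tset {t : Fin N} : t ∈ Tset μ ↔ μ t = 1 := by
  simp [Tset]

@[simp]
theorem mem_SsetLe {m s : Fin N} : s ∈ SsetLe μ m ↔ μ s = 0 ∧ s ≤ m := by
  simp [SsetLe]

@[simp]
theorem mem_TsetGe {m t : Fin N} : t ∈ TsetGe μ m ↔ μ t = 1 ∧ m ≤ t := by
  simp [TsetGe]

theorem mem_Board {p : Fin N × Fin N} : p ∈ Board μ ↔ μ p.1 = 0 ∧ μ p.2 = 1 ∧ p.1 < p.2 := by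
  simp [Board, and_assoc]

end Board

namespace IsRookPlacement

variable {N : ℕ} {μ : Fin N → ℕ} {σ : Finset (Fin N × Fin N)}

theorem mem_board (hσ : IsRookPlacement μ σ) {p : Fin N × Fin N} (hp : p ∈ σ) :
    μ p.1 = 0 ∧ μ p.2 = 1 ∧ p.1 < p.2 :=
  mem_Board.1 (hσ.1 hp)

theorem mono (hσ : IsRookPlacement μ σ) {τ : Finset (Fin N × Fin N)} (hτ : τ ⊆ σ) :
    IsRookPlacement μ τ :=
  ⟨hτ.trans hσ.1, fun p hp q hq => hσ.2.1 p (hτ hp) q (hτ hq),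
    fun p hp q hq => hσ.2.2 p (hτ hp) q (hτ hq)⟩

theorem card_rows (hσ : IsRookPlacement μ σ) : (rows σ).card = σ.card :=
  Finset.card_image_of_injOn hσ.2.1

theorem card_cols (hσ : IsRookPlacement μ σ) : (cols σ).card = σ.card :=
  Finset.card_image_of_injOn hσ.2.2

theorem disjoint_rows_cols (hσ : IsRookPlacement μ σ) : Disjoint (rows σ) (cols σ) := by
  simp only [Finset.disjoint_left, rows, cols, Finset.mem_image]
  rintro _ ⟨p, hp, rfl⟩ ⟨q, hq, hqp⟩
  have := (hσ.mem_board hq).2.1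
  rw [hqp, (hσ.mem_board hp).1] at this
  exact zero_ne_one this

theorem card_rows_union_cols (hσ : IsRookPlacement μ σ) :
    (rows σ ∪ cols σ).card = 2 * σ.card := by
  rw [Finset.card_union_of_disjoint hσ.disjoint_rows_cols, hσ.card_rows, hσ.card_cols, two_mul]

theorem rows_union_cols_inter_SsetLe (hσ : IsRookPlacement μ σ) (m : Fin N) :
    (rows σ ∪ cols σ) ∩ SsetLe μ m = rows (σ.filter fun p => p.1 ≤ m) := by
  ext x
  simp only [rows, cols, Finset.mem_inter, Finset.mem_union, Finset.mem_image,
    Finset.mem_filter, mem_SsetLe]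
  constructor
  · rintro ⟨⟨p, hp, rfl⟩ | ⟨p, hp, rfl⟩, hx0, hxm⟩
    · exact ⟨p, ⟨hp, hxm⟩, rfl⟩
    · exact absurd hx0 (by simp [(hσ.mem_board hp).2.1])
  · rintro ⟨p, ⟨hp, hpm⟩, rfl⟩
    exact ⟨Or.inl ⟨p, hp, rfl⟩, (hσ.mem_board hp).1, hpm⟩

theorem rows_union_cols_inter_TsetGe (hσ : IsRookPlacement μ σ) (m : Fin N) :
    (rows σ ∪ cols σ) ∩ TsetGe μ m = cols (σ.filter fun p => m ≤ p.2) := by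
  ext x
  simp only [rows, cols, Finset.mem_inter, Finset.mem_union, Finset.mem_image,
    Finset.mem_filter, mem_TsetGe]
  constructor
  · rintro ⟨⟨p, hp, rfl⟩ | ⟨p, hp, rfl⟩, hx1, hxm⟩
    · exact absurd hx1 (by simp [(hσ.mem_board hp).1])
    · exact ⟨p, ⟨hp, hxm⟩, rfl⟩
  · rintro ⟨p, ⟨hp, hpm⟩, rfl⟩
    exact ⟨Or.inr ⟨p, hp, rfl⟩, (hσ.mem_board hp).2.1, hpm⟩

theorem inter_SsetLe_product_TsetGe (hσ : IsRookPlacement μ σ) (m : Fin N) :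
    σ ∩ SsetLe μ m ×ˢ TsetGe μ m = (σ.filter fun p => p.1 ≤ m) ∩ σ.filter fun p => m ≤ p.2 := by
  ext p
  simp only [Finset.mem_inter, Finset.mem_product, Finset.mem_filter, mem_SsetLe, mem_TsetGe]
  constructor
  · rintro ⟨hp, ⟨_, h1⟩, _, h2⟩
    exact ⟨⟨hp, h1⟩, hp, h2⟩
  · rintro ⟨⟨hp, h1⟩, _, h2⟩
    exact ⟨hp, ⟨(hσ.mem_board hp).1, h1⟩, (hσ.mem_board hp).2.1, h2⟩

theorem filter_union_filter (hσ : IsRookPlacement μ σ) (m : Fin N) :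
    ((σ.filter fun p => p.1 ≤ m) ∪ σ.filter fun p => m ≤ p.2) = σ := by
  rw [← Finset.filter_or, Finset.filter_true_of_mem]
  intro p hp
  by_contra! h
  exact lt_asymm (h.1.trans (hσ.mem_board hp).2.2) h.2

end IsRookPlacement

theorem stmt9_general {N : ℕ} (μ : Fin N → ℕ)
    (lam : Finset (Fin N))
    (m : Fin N) (σ : Finset (Fin N × Fin N))
    (hσ : IsRookPlacement μ σ) (htype : rows σ ∪ cols σ = lam) :
    (σ ∩ SsetLe μ m ×ˢ TsetGe μ m).card =
      (lam ∩ SsetLe μ m).card + (lam ∩ TsetGe μ m).card - lam.card / 2 := by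
  subst htype
  rw [hσ.inter_SsetLe_product_TsetGe, hσ.rows_union_cols_inter_SsetLe,
    hσ.rows_union_cols_inter_TsetGe, hσ.card_rows_union_cols,
    (hσ.mono (Finset.filter_subset _ σ)).card_rows, (hσ.mono (Finset.filter_subset _ σ)).card_cols]
  have hunion := Finset.card_inter_add_card_union (σ.filter fun p => p.1 ≤ m)
    (σ.filter fun p => m ≤ p.2)
  rw [hσ.filter_union_filter m] at hunion
  omega

/-- For every rook placement `σ` on `B_μ` of type `λ`,
`|σ ∩ (S_μ(m) × T_μ(m))| = |λ ∩ S_μ(m)| + |λ ∩ T_μ(m)| − |λ|/2`. -/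
theorem stmt9 {N : ℕ} (hN : 1 ≤ N) (μ : Fin N → ℕ) (hμ : ∀ i, μ i ≤ 1)
    (lam : Finset (Fin N)) (hint : Interlacing (lam ∩ Sset μ) (lam ∩ Tset μ))
    (m : Fin N) (σ : Finset (Fin N × Fin N))
    (hσ : IsRookPlacement μ σ) (htype : rows σ ∪ cols σ = lam) :
    (σ ∩ SsetLe μ m ×ˢ TsetGe μ m).card =
      (lam ∩ SsetLe μ m).card + (lam ∩ TsetGe μ m).card - lam.card / 2 :=
  stmt9_general μ lam m σ hσ htype
end

section
/- Let μ ∈ {0,1}^N and let λ ⊆ {1,…,N} be such that (λ ∩ S_μ, λ ∩ T_μ) satisfies the interlacing condition. For 1 ≤ m ≤ N let ρ(m,μ,λ) = |λ ∩ S_μ(m)| + |λ ∩ T_μ(m)| − |λ|/2. Then for every complex number q with q ≠ 0 and q ≠ 1, the sum of q^{inv(σ)} over all rook placements σ on B_μ of type λ equals the product over s ∈ λ ∩ S_μ of (q^{ρ(s,μ,λ)} − 1)/(q − 1). -/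
/-- The total inversion number of a rook placement. -/
def inversions {N : ℕ} (σ : Finset (Fin N × Fin N)) : ℕ :=
  ∑ p ∈ σ, (σ.filter fun p' => p'.1 < p.1 ∧ p.2 < p'.2).card

/-- `ρ(m,μ,λ) = |λ ∩ S_μ(m)| + |λ ∩ T_μ(m)| − |λ|/2`. -/
def rho {N : ℕ} (μ : Fin N → ℕ) (lam : Finset (Fin N)) (m : Fin N) : ℕ :=
  (lam ∩ SsetLe μ m).card + (lam ∩ TsetGe μ m).card - lam.card / 2

open Finset

theorem sum_pow_card_filter_lt {α M : Type*} [LinearOrder α] [CommSemiring M] (q : M)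
    (s : Finset α) : ∑ t ∈ s, q ^ #(s.filter (t < ·)) = ∑ j ∈ range #s, q ^ j := by
  induction s using Finset.induction_on_min with
  | empty => simp
  | insert a s ha ih =>
    have has : a ∉ s := fun h => lt_irrefl a (ha a h)
    have h_a : (insert a s).filter (a < ·) = s := by
      rw [filter_insert, if_neg (lt_irrefl a)]
      exact filter_true_of_mem ha
    have h_t : ∀ t ∈ s, (insert a s).filter (t < ·) = s.filter (t < ·) := fun t ht => by
      rw [filter_insert, if_neg (ha t ht).not_gt]
    rw [sum_insert has, h_a, sum_congr rfl fun t ht => by rw [h_t t ht], ih,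
      card_insert_of_notMem has, sum_range_succ, add_comm]

section Placement

variable {N : ℕ}

structure IsPlacement (R C : Finset (Fin N)) (σ : Finset (Fin N × Fin N)) : Prop where
  lt : ∀ p ∈ σ, p.1 < p.2
  injOn_fst : Set.InjOn Prod.fst (σ : Set (Fin N × Fin N))
  injOn_snd : Set.InjOn Prod.snd (σ : Set (Fin N × Fin N))
  rows_eq : rows σ = R
  cols_eq : cols σ = C

open Classical in
noncomputable def placements (R C : Finset (Fin N)) : Finset (Finset (Fin N × Fin N)) :=
  univ.filter (IsPlacement R C)

variable {R C : Finset (Fin N)} {σ : Finset (Fin N × Fin N)} {p : Fin N × Fin N}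

theorem mem_placements : σ ∈ placements R C ↔ IsPlacement R C σ := by
  simp [placements]

theorem placements_empty : placements (∅ : Finset (Fin N)) ∅ = {∅} := by
  ext σ
  rw [mem_placements, mem_singleton]
  constructor
  · intro h
    simpa [rows] using h.rows_eq
  · rintro rfl
    exact ⟨by simp, by simp, by simp, rfl, rfl⟩

theorem inversions_insert (hrow : ∀ p' ∈ σ, p'.1 < p.1) :
    inversions (insert p σ) = inversions σ + #(σ.filter (p.2 < ·.2)) := by
  have hp : p ∉ σ := fun hp => lt_irrefl _ (hrow p hp)
  have h_new : (insert p σ).filter (fun p' => p'.1 < p.1 ∧ p.2 < p'.2) =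
      σ.filter (p.2 < ·.2) := by
    rw [filter_insert, if_neg (by simp)]
    exact filter_congr fun p' hp' => and_iff_right (hrow p' hp')
  have h_old : ∀ p' ∈ σ, (insert p σ).filter (fun p'' => p''.1 < p'.1 ∧ p'.2 < p''.2) =
      σ.filter (fun p'' => p''.1 < p'.1 ∧ p'.2 < p''.2) := fun p' hp' => by
    rw [filter_insert, if_neg fun h => (hrow p' hp').not_gt h.1]
  rw [inversions, sum_insert hp, h_new,
    sum_congr rfl fun p' hp' => congrArg card (h_old p' hp'), inversions, add_comm]

namespace IsPlacement

theorem fst_mem (h : IsPlacement R C σ) (hp : p ∈ σ) : p.1 ∈ R :=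
  h.rows_eq ▸ mem_image_of_mem _ hp

theorem snd_mem (h : IsPlacement R C σ) (hp : p ∈ σ) : p.2 ∈ C :=
  h.cols_eq ▸ mem_image_of_mem _ hp

theorem erase (h : IsPlacement R C σ) (hp : p ∈ σ) :
    IsPlacement (R.erase p.1) (C.erase p.2) (σ.erase p) where
  lt p' hp' := h.lt p' (mem_of_mem_erase hp')
  injOn_fst := h.injOn_fst.mono (by simp)
  injOn_snd := h.injOn_snd.mono (by simp)
  rows_eq := by
    rw [← h.rows_eq, rows, rows, ← coe_inj, coe_image, coe_erase, coe_erase, coe_image,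
      h.injOn_fst.image_sdiff_subset (by simpa using hp), Set.image_singleton]
  cols_eq := by
    rw [← h.cols_eq, cols, cols, ← coe_inj, coe_image, coe_erase, coe_erase, coe_image,
      h.injOn_snd.image_sdiff_subset (by simpa using hp), Set.image_singleton]

theorem insert {s t : Fin N} (h : IsPlacement (R.erase s) (C.erase t) σ) (hs : s ∈ R)
    (ht : t ∈ C) (hst : s < t) : IsPlacement R C (insert (s, t) σ) := by
  have hs_rows : s ∉ rows σ := by simp [h.rows_eq]
  have ht_cols : t ∉ cols σ := by simp [h.cols_eq]
  have hnot : (s, t) ∉ σ := fun hst' => hs_rows (mem_image_of_mem _ hst')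
  refine ⟨?_, ?_, ?_, ?_, ?_⟩
  · simpa [hst] using h.lt
  · rw [coe_insert, Set.injOn_insert (by simpa using hnot)]
    exact ⟨h.injOn_fst, by simpa [rows] using hs_rows⟩
  · rw [coe_insert, Set.injOn_insert (by simpa using hnot)]
    exact ⟨h.injOn_snd, by simpa [cols] using ht_cols⟩
  · rw [rows, image_insert, ← rows, h.rows_eq, insert_erase hs]
  · rw [cols, image_insert, ← cols, h.cols_eq, insert_erase ht]

theorem card_filter_snd (h : IsPlacement R C σ) (P : Fin N → Prop) [DecidablePred P] :
    #(σ.filter (P ·.2)) = #(C.filter P) := by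
  rw [← h.cols_eq, cols, filter_image,
    card_image_of_injOn (h.injOn_snd.mono (coe_subset.mpr (filter_subset _ _)))]

end IsPlacement

theorem sum_placements_insert_max {M : Type*} [CommSemiring M] (q : M) {a : Fin N}
    (R C : Finset (Fin N)) (ha : ∀ r ∈ R, r < a) :
    ∑ σ ∈ placements (insert a R) C, q ^ inversions σ =
      ∑ t ∈ C.filter (a < ·), q ^ #(C.filter (t < ·)) *
        ∑ σ ∈ placements R (C.erase t), q ^ inversions σ := by
  have haR : a ∉ R := fun h => lt_irrefl a (ha a h)
  simp_rw [mul_sum, ← pow_add]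
  rw [sum_sigma']
  symm
  refine sum_bij (fun x _ => insert (a, x.1) x.2) ?_ ?_ ?_ ?_
  · rintro ⟨t, σ⟩ hx
    simp only [mem_sigma, mem_filter, mem_placements] at hx ⊢
    obtain ⟨⟨ht, hat⟩, hσ⟩ := hx
    exact IsPlacement.insert (by rwa [erase_insert haR]) (mem_insert_self a R) ht hat
  · rintro ⟨t₁, σ₁⟩ hx₁ ⟨t₂, σ₂⟩ hx₂ heq
    simp only [mem_sigma, mem_placements] at hx₁ hx₂
    have ha_rows : ∀ {t σ}, IsPlacement R (C.erase t) σ → (a, t) ∉ σ :=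
      fun h hat => haR (h.fst_mem hat)
    have ht : t₁ = t₂ := by
      have h₁ : (a, t₁) ∈ insert (a, t₂) σ₂ := heq ▸ mem_insert_self _ _
      rcases mem_insert.mp h₁ with h | h
      · exact (Prod.ext_iff.mp h).2
      · exact absurd (hx₂.2.fst_mem h) haR
    subst ht
    have hσ : σ₁ = σ₂ := by
      rw [← erase_insert (ha_rows hx₁.2), heq, erase_insert (ha_rows hx₂.2)]
    rw [hσ]
  · intro σ hσ
    rw [mem_placements] at hσ
    obtain ⟨p, hp, hpa⟩ := mem_image.mp (hσ.rows_eq ▸ mem_insert_self a R : a ∈ rows σ)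
    have hp_eq : p = (a, p.2) := Prod.ext hpa rfl
    refine ⟨⟨p.2, σ.erase p⟩, ?_, by simp [← hp_eq, insert_erase hp]⟩
    simp only [mem_sigma, mem_filter, mem_placements]
    refine ⟨⟨hσ.snd_mem hp, hpa ▸ hσ.lt p hp⟩, ?_⟩
    simpa [hpa, erase_insert haR] using hσ.erase hp
  · rintro ⟨t, σ⟩ hx
    simp only [mem_sigma, mem_filter, mem_placements] at hx
    obtain ⟨⟨-, hat⟩, hσ⟩ := hx
    rw [inversions_insert fun p hp => ha _ (hσ.fst_mem hp), hσ.card_filter_snd, filter_erase,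
      erase_eq_of_notMem (by simp), add_comm]

theorem sum_pow_inversions_placements {M : Type*} [CommSemiring M] (q : M)
    (R C : Finset (Fin N)) (hcard : #R = #C) :
    ∑ σ ∈ placements R C, q ^ inversions σ =
      ∏ r ∈ R, ∑ j ∈ range (#(C.filter (r < ·)) - #(R.filter (r < ·))), q ^ j := by
  induction R using Finset.induction_on_max generalizing C with
  | empty =>
    rw [card_empty, eq_comm, card_eq_zero] at hcard
    subst hcard
    simp [placements_empty, inversions]
  | insert a R ha ih =>
    have haR : a ∉ R := fun h => lt_irrefl a (ha a h)
    have h_exp : ∀ t ∈ C.filter (a < ·), ∀ r ∈ R,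
        #((C.erase t).filter (r < ·)) - #(R.filter (r < ·)) =
          #(C.filter (r < ·)) - #((insert a R).filter (r < ·)) := by
      intro t ht r hr
      obtain ⟨htC, hat⟩ := mem_filter.mp ht
      rw [filter_erase, card_erase_of_mem (mem_filter.mpr ⟨htC, (ha r hr).trans hat⟩),
        filter_insert, if_pos (ha r hr), card_insert_of_notMem fun h => haR (mem_filter.mp h).1]
      exact (Nat.sub_right_comm ..).trans (Nat.sub_sub ..)
    have h_inner : ∀ t ∈ C.filter (a < ·),
        ∑ σ ∈ placements R (C.erase t), q ^ inversions σ =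
          ∏ r ∈ R,
            ∑ j ∈ range (#(C.filter (r < ·)) - #((insert a R).filter (r < ·))), q ^ j := by
      intro t ht
      have hcard' : #R = #(C.erase t) := by
        rw [card_erase_of_mem (mem_filter.mp ht).1, ← hcard, card_insert_of_notMem haR,
          Nat.add_sub_cancel]
      rw [ih _ hcard']
      exact prod_congr rfl fun r hr => by rw [h_exp t ht r hr]
    have h_top : (insert a R).filter (a < ·) = ∅ :=
      filter_eq_empty_iff.mpr fun x hx => by
        rcases mem_insert.mp hx with rfl | hx
        exacts [lt_irrefl x, (ha x hx).not_gt]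
    have h_cols : ∀ t ∈ C.filter (a < ·),
        C.filter (t < ·) = (C.filter (a < ·)).filter (t < ·) := fun t ht => by
      rw [filter_filter]
      exact filter_congr fun x _ =>
        ⟨fun htx => ⟨(mem_filter.mp ht).2.trans htx, htx⟩, And.right⟩
    rw [sum_placements_insert_max q R C ha, sum_congr rfl fun t ht => by rw [h_inner t ht],
      ← sum_mul, prod_insert haR, h_top, card_empty, Nat.sub_zero,
      sum_congr rfl fun t ht => by rw [h_cols t ht], sum_pow_card_filter_lt]

end Placement

theorem union_inter_eq_left_of_subset {α : Type*} [DecidableEq α] {A B S : Finset α}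
    (hA : A ⊆ S) (hB : Disjoint B S) : (A ∪ B) ∩ S = A := by
  rw [union_inter_distrib_right, inter_eq_left.mpr hA, disjoint_iff_inter_eq_empty.mp hB,
    union_empty]

section Shape

variable {N : ℕ} {μ : Fin N → ℕ} {lam : Finset (Fin N)}

theorem disjoint_sset_tset : Disjoint (Sset μ) (Tset μ) := by
  rw [Sset, Tset, disjoint_filter]
  intro i _ h0 h1
  exact zero_ne_one (h0.symm.trans h1)

theorem inter_sset_union_inter_tset (hμ : ∀ i, μ i ≤ 1) :
    lam ∩ Sset μ ∪ lam ∩ Tset μ = lam := by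
  ext i
  rcases Nat.le_one_iff_eq_zero_or_eq_one.mp (hμ i) with h | h <;> simp [Sset, Tset, h]

theorem isRookPlacement_and_type_iff (hμ : ∀ i, μ i ≤ 1) {σ : Finset (Fin N × Fin N)} :
    IsRookPlacement μ σ ∧ rows σ ∪ cols σ = lam ↔
      IsPlacement (lam ∩ Sset μ) (lam ∩ Tset μ) σ := by
  constructor
  · rintro ⟨⟨hboard, hfst, hsnd⟩, rfl⟩
    have hmem : ∀ p ∈ σ, (p.1 ∈ Sset μ ∧ p.2 ∈ Tset μ) ∧ p.1 < p.2 := fun p hp => by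
      simpa [Board] using hboard hp
    have hrows : rows σ ⊆ Sset μ := by
      simpa [rows, image_subset_iff] using fun p hp => (hmem p hp).1.1
    have hcols : cols σ ⊆ Tset μ := by
      simpa [cols, image_subset_iff] using fun p hp => (hmem p hp).1.2
    refine ⟨fun p hp => (hmem p hp).2, fun p hp p' hp' => hfst p hp p' hp',
      fun p hp p' hp' => hsnd p hp p' hp', ?_, ?_⟩
    · exact (union_inter_eq_left_of_subset hrows
        (disjoint_of_subset_left hcols disjoint_sset_tset.symm)).symm
    · rw [union_comm]
      exact (union_inter_eq_left_of_subset hcols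
        (disjoint_of_subset_left hrows disjoint_sset_tset)).symm
  · intro h
    refine ⟨⟨fun p hp => ?_, fun p hp p' hp' => @h.injOn_fst p hp p' hp',
      fun p hp p' hp' => @h.injOn_snd p hp p' hp'⟩, ?_⟩
    · simp only [Board, mem_filter, mem_product]
      exact ⟨⟨(mem_inter.mp (h.fst_mem hp)).2, (mem_inter.mp (h.snd_mem hp)).2⟩, h.lt p hp⟩
    · rw [h.rows_eq, h.cols_eq, inter_sset_union_inter_tset hμ]

theorem rho_eq (hμ : ∀ i, μ i ≤ 1) (hcard : #(lam ∩ Sset μ) = #(lam ∩ Tset μ)) {s : Fin N}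
    (hs : s ∈ lam ∩ Sset μ) :
    rho μ lam s = #((lam ∩ Tset μ).filter (s < ·)) - #((lam ∩ Sset μ).filter (s < ·)) := by
  have h_le : lam ∩ SsetLe μ s = (lam ∩ Sset μ).filter (· ≤ s) := by
    rw [SsetLe, inter_filter]
  have h_ge : lam ∩ TsetGe μ s = (lam ∩ Tset μ).filter (s < ·) := by
    rw [TsetGe, inter_filter]
    refine filter_congr fun t ht => Ne.le_iff_lt ?_
    rintro rfl
    exact disjoint_left.mp disjoint_sset_tset (mem_inter.mp hs).2 (mem_inter.mp ht).2
  have h_split := card_filter_add_card_filter_not (s := lam ∩ Sset μ) (· ≤ s)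
  have h_lam : #lam = #(lam ∩ Sset μ) + #(lam ∩ Tset μ) := by
    rw [← card_union_of_disjoint
      (disjoint_sset_tset.mono inter_subset_right inter_subset_right),
      inter_sset_union_inter_tset hμ]
  simp only [not_le] at h_split
  rw [rho, h_le, h_ge, h_lam]
  omega

end Shape

open Classical in
theorem stmt10_general {N : ℕ} (μ : Fin N → ℕ) (hμ : ∀ i, μ i ≤ 1)
    (lam : Finset (Fin N)) (hint : Interlacing (lam ∩ Sset μ) (lam ∩ Tset μ))
    (q : ℂ) (hq1 : q ≠ 1) :
    ∑ σ ∈ Finset.univ.filter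
        (fun σ : Finset (Fin N × Fin N) => IsRookPlacement μ σ ∧ rows σ ∪ cols σ = lam),
      q ^ inversions σ =
      ∏ s ∈ lam ∩ Sset μ, (q ^ rho μ lam s - 1) / (q - 1) := by
  obtain ⟨hcard, -⟩ := hint
  have h_placements : Finset.univ.filter
      (fun σ : Finset (Fin N × Fin N) => IsRookPlacement μ σ ∧ rows σ ∪ cols σ = lam) =
      placements (lam ∩ Sset μ) (lam ∩ Tset μ) := by
    ext σ
    simp [mem_placements, isRookPlacement_and_type_iff hμ]
  rw [h_placements, sum_pow_inversions_placements q _ _ hcard]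
  exact prod_congr rfl fun s hs => by rw [rho_eq hμ hcard hs, geom_sum_eq hq1]

open Classical in
theorem stmt10 {N : ℕ} (hN : 1 ≤ N) (μ : Fin N → ℕ) (hμ : ∀ i, μ i ≤ 1)
    (lam : Finset (Fin N)) (hint : Interlacing (lam ∩ Sset μ) (lam ∩ Tset μ))
    (q : ℂ) (hq0 : q ≠ 0) (hq1 : q ≠ 1) :
    ∑ σ ∈ Finset.univ.filter
        (fun σ : Finset (Fin N × Fin N) => IsRookPlacement μ σ ∧ rows σ ∪ cols σ = lam),
      q ^ inversions σ =
      ∏ s ∈ lam ∩ Sset μ, (q ^ rho μ lam s - 1) / (q - 1) :=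
  stmt10_general μ hμ lam hint q hq1
end

section
/- Let μ ∈ {0,1}^N with μ not equal to the all-zeros or all-ones tuple. For a subset σ ⊆ B_μ, the following are equivalent: (i) there exists M ∈ M_μ(F_q) such that σ(M) = σ; (ii) σ is a rook placement on B_μ. -/
/-- The Ferrers board `B_μ` as a set: `{(s,t) : μ_s = 0, μ_t = 1, s < t}`. -/
def BoardSet {N : ℕ} (μ : Fin N → ℕ) : Set (Fin N × Fin N) :=
  {p | μ p.1 = 0 ∧ μ p.2 = 1 ∧ p.1 < p.2}

/-- `M_μ(F)`: matrices (with rows indexed by `S_μ` and columns by `T_μ`, here encoded on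
all of `Fin N × Fin N`) whose nonzero entries lie in `B_μ`. -/
def MSet (F : Type*) [Field F] {N : ℕ} (μ : Fin N → ℕ) : Set (Fin N → Fin N → F) :=
  {M | ∀ s t, M s t ≠ 0 → μ s = 0 ∧ μ t = 1 ∧ s < t}

/-- The rank of the submatrix of `M` with rows `{a ∈ S_μ : rowP a}` and columns
`{b ∈ T_μ : colP b}`. -/
noncomputable def rkOn {F : Type*} [Field F] {N : ℕ} (μ : Fin N → ℕ)
    (M : Fin N → Fin N → F) (rowP colP : Fin N → Prop)
    [DecidablePred rowP] [DecidablePred colP] : ℕ :=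
  Matrix.rank (Matrix.of fun (a : {a : Fin N // μ a = 0 ∧ rowP a})
    (b : {b : Fin N // μ b = 1 ∧ colP b}) => M a.1 b.1)

/-- `σ(M)`: the set of `(s,t) ∈ B_μ` such that
`r⁻(M,s,t) = r⁺(M,s,t) = r⁻⁺(M,s,t) = rank M(s,t) − 1`, where `M(s,t)` is the submatrix
with rows `{s' ∈ S_μ : s' ≤ s}` and columns `{t' ∈ T_μ : t' ≥ t}`, and `r⁻`, `r⁺`, `r⁻⁺`
are the ranks of the submatrices obtained by shrinking to rows `< s` and/or columns `> t`
(an empty matrix having rank `0`). -/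
def sigmaOf {F : Type*} [Field F] {N : ℕ} (μ : Fin N → ℕ) (M : Fin N → Fin N → F) :
    Set (Fin N × Fin N) :=
  {p | p ∈ BoardSet μ ∧
    rkOn μ M (fun a => a < p.1) (fun b => p.2 ≤ b) + 1
      = rkOn μ M (fun a => a ≤ p.1) (fun b => p.2 ≤ b) ∧
    rkOn μ M (fun a => a ≤ p.1) (fun b => p.2 < b) + 1
      = rkOn μ M (fun a => a ≤ p.1) (fun b => p.2 ≤ b) ∧
    rkOn μ M (fun a => a < p.1) (fun b => p.2 < b) + 1
      = rkOn μ M (fun a => a ≤ p.1) (fun b => p.2 ≤ b)}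

/-- A rook placement on `B_μ` (as a set). -/
def IsRookPlacementSet {N : ℕ} (μ : Fin N → ℕ) (σ : Set (Fin N × Fin N)) : Prop :=
  σ ⊆ BoardSet μ ∧ (∀ p ∈ σ, ∀ p' ∈ σ, p.1 = p'.1 → p = p') ∧
    (∀ p ∈ σ, ∀ p' ∈ σ, p.2 = p'.2 → p = p')


/-!
Write `r(P, Q)` for the rank of the submatrix of `M` on the rows in `P` and the columns in `Q`.
At a point `(s, t)` of `σ(M)` the equalities `r(<s, >t) = r(≤s, >t)` and
`r(<s, ≥t) = r(<s, >t)` say that row `s`, restricted to the columns `> t`, lies in the span of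
the rows above it, and that column `t`, restricted to the rows `< s`, lies in the span of the
columns to its right. Both survive the deletion of further columns, resp. rows, so a second
point of `σ(M)` in row `s` or in column `t` would contradict its own rank jump.

Conversely a rook placement `σ` is `σ(M)` for its 0/1 matrix `M`: the rank of every
submatrix of `M` is the number of rooks in it, and the three rank jumps at `(s, t)` then say
that the last row, the first column, and their union, of the corner `{≤ s} × {≥ t}` each
contain exactly one rook, which must be a rook at `(s, t)`.
-/

open Submodule Module

section RowSpan

variable {F : Type*} [Field F]

theorem finrank_span_image_insert_eq {V W : Type*} [AddCommGroup V] [Module F V]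
    [AddCommGroup W] [Module F W] [FiniteDimensional F V] (f : V →ₗ[F] W) {S : Set V} {x : V}
    (h : finrank F (span F (insert x S)) = finrank F (span F S)) :
    finrank F (span F (f '' insert x S)) = finrank F (span F (f '' S)) := by
  have hx : x ∈ span F S := by
    rw [eq_of_le_of_finrank_le (span_mono (Set.subset_insert x S)) h.le]
    exact subset_span (Set.mem_insert x S)
  have hfx : f x ∈ span F (f '' S) := by
    rw [span_image]
    exact mem_map_of_mem hx
  rw [Set.image_insert_eq, span_insert_eq_span hfx]

variable {α β : Type*}

theorem Matrix.rank_submatrix_val_eq_finrank_span_image (A : Matrix α β F)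
    (R : α → Prop) (C : β → Prop) [Finite (Subtype R)] [Fintype (Subtype C)] :
    (A.submatrix (Subtype.val : Subtype R → α) (Subtype.val : Subtype C → β)).rank =
      finrank F (span F ((fun a (b : Subtype C) => A a b) '' {a | R a})) := by
  rw [Matrix.rank_eq_finrank_span_row, Set.image_eq_range]
  rfl

theorem Matrix.rank_submatrix_insert_row_eq_of_le (A : Matrix α β F) {i : α}
    {R R' : α → Prop} {C C' : β → Prop} [Finite (Subtype R)] [Finite (Subtype R')]
    [Fintype (Subtype C)] [Fintype (Subtype C')]
    (hR : ∀ a, R' a ↔ a = i ∨ R a) (hC : C' ≤ C)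
    (h : (A.submatrix (Subtype.val : Subtype R' → α) (Subtype.val : Subtype C → β)).rank =
      (A.submatrix (Subtype.val : Subtype R → α) (Subtype.val : Subtype C → β)).rank) :
    (A.submatrix (Subtype.val : Subtype R' → α) (Subtype.val : Subtype C' → β)).rank =
      (A.submatrix (Subtype.val : Subtype R → α) (Subtype.val : Subtype C' → β)).rank := by
  have hR' : {a | R' a} = insert i {a | R a} := Set.ext hR
  rw [Matrix.rank_submatrix_val_eq_finrank_span_image,
    Matrix.rank_submatrix_val_eq_finrank_span_image, hR'] at h ⊢
  rw [Set.image_insert_eq] at h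
  have hrestrict : (fun a (b : Subtype C') => A a b) =
      LinearMap.funLeft F F (fun b : Subtype C' => (⟨b.1, hC b.1 b.2⟩ : Subtype C)) ∘
        (fun a (b : Subtype C) => A a b) := rfl
  rw [hrestrict, Set.image_comp, Set.image_comp, Set.image_insert_eq]
  exact finrank_span_image_insert_eq _ h

end RowSpan

section RankOn

variable {F : Type*} [Field F] {N : ℕ} (μ : Fin N → ℕ) (M : Fin N → Fin N → F)

theorem rkOn_le_eq_rkOn_lt_of_le {s : Fin N} (hs : μ s = 0) {Q Q' : Fin N → Prop}
    [DecidablePred Q] [DecidablePred Q'] (hQ : Q' ≤ Q)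
    (h : rkOn μ M (· ≤ s) Q = rkOn μ M (· < s) Q) :
    rkOn μ M (· ≤ s) Q' = rkOn μ M (· < s) Q' :=
  Matrix.rank_submatrix_insert_row_eq_of_le (Matrix.of M) (i := s)
    (fun a => by grind) (fun b hb => ⟨hb.1, hQ b hb.2⟩) h

theorem rkOn_ge_eq_rkOn_gt_of_le {t : Fin N} (ht : μ t = 1) {P P' : Fin N → Prop}
    [DecidablePred P] [DecidablePred P'] (hP : P' ≤ P)
    (h : rkOn μ M P (t ≤ ·) = rkOn μ M P (t < ·)) :
    rkOn μ M P' (t ≤ ·) = rkOn μ M P' (t < ·) := by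
  simp only [rkOn, ← Matrix.rank_transpose (Matrix.of _)] at h ⊢
  exact Matrix.rank_submatrix_insert_row_eq_of_le (Matrix.of M).transpose (i := t)
    (fun b => by grind) (fun a ha => ⟨ha.1, hP a ha.2⟩) h

end RankOn

section SigmaOf

variable {F : Type*} [Field F] {N : ℕ} {μ : Fin N → ℕ} {M : Fin N → Fin N → F}

theorem not_lt_snd_of_mem_sigmaOf {p p' : Fin N × Fin N} (hp : p ∈ sigmaOf μ M)
    (hp' : p' ∈ sigmaOf μ M) (h : p.1 = p'.1) : ¬ p.2 < p'.2 := by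
  intro hlt
  obtain ⟨hpB, -, hp₂, hp₃⟩ := hp
  obtain ⟨-, hp'₁, -, -⟩ := hp'
  have := rkOn_le_eq_rkOn_lt_of_le μ M hpB.1 (Q' := (p'.2 ≤ ·))
    (fun b hb => hlt.trans_le hb) (by omega)
  rw [h] at this
  omega

theorem not_lt_fst_of_mem_sigmaOf {p p' : Fin N × Fin N} (hp : p ∈ sigmaOf μ M)
    (hp' : p' ∈ sigmaOf μ M) (h : p.2 = p'.2) : ¬ p.1 < p'.1 := by
  intro hlt
  obtain ⟨-, -, hp₂, -⟩ := hp
  obtain ⟨hp'B, hp'₁, -, hp'₃⟩ := hp'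
  have := rkOn_ge_eq_rkOn_gt_of_le μ M hp'B.2.1 (P' := (· ≤ p.1))
    (fun a ha => ha.trans_lt hlt) (by omega)
  rw [← h] at this
  omega

theorem sigmaOf_injOn_fst : (sigmaOf μ M).InjOn Prod.fst := fun _ hp _ hp' h =>
  Prod.ext h <| le_antisymm (not_lt.1 <| not_lt_snd_of_mem_sigmaOf hp' hp h.symm)
    (not_lt.1 <| not_lt_snd_of_mem_sigmaOf hp hp' h)

theorem sigmaOf_injOn_snd : (sigmaOf μ M).InjOn Prod.snd := fun _ hp _ hp' h =>
  Prod.ext (le_antisymm (not_lt.1 <| not_lt_fst_of_mem_sigmaOf hp' hp h.symm)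
    (not_lt.1 <| not_lt_fst_of_mem_sigmaOf hp hp' h)) h

theorem isRookPlacementSet_sigmaOf : IsRookPlacementSet μ (sigmaOf μ M) :=
  ⟨fun _ hp => hp.1, sigmaOf_injOn_fst, sigmaOf_injOn_snd⟩

end SigmaOf

section RookMatrix

variable (F : Type*) [Field F] {m n : Type*}

open Classical in
noncomputable def rookMatrix (σ : Set (m × n)) : Matrix m n F :=
  Matrix.of fun a b => if (a, b) ∈ σ then 1 else 0

variable {F}

theorem rookMatrix_row_of_mem [DecidableEq n] {σ : Set (m × n)} (hσ : σ.InjOn Prod.fst)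
    {a : m} {b : n} (hab : (a, b) ∈ σ) : (rookMatrix F σ).row a = Pi.single b 1 := by
  ext b'
  by_cases hb' : b' = b
  · subst hb'
    simp [rookMatrix, Matrix.row, hab]
  · have : (a, b') ∉ σ := fun h => hb' (congrArg Prod.snd (hσ h hab rfl))
    simp [rookMatrix, Matrix.row, this, hb']

theorem rookMatrix_row_of_forall_notMem {σ : Set (m × n)} {a : m} (ha : ∀ b, (a, b) ∉ σ) :
    (rookMatrix F σ).row a = 0 := by
  ext b
  simp [rookMatrix, Matrix.row, ha b]

theorem span_range_rookMatrix_row [DecidableEq n] {σ : Set (m × n)} (hσ : σ.InjOn Prod.fst) :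
    span F (Set.range (rookMatrix F σ).row) =
      span F ((fun b => (Pi.single b 1 : n → F)) '' (Prod.snd '' σ)) := by
  apply le_antisymm
  · rw [span_le]
    rintro _ ⟨a, rfl⟩
    by_cases ha : ∃ b, (a, b) ∈ σ
    · obtain ⟨b, hab⟩ := ha
      rw [rookMatrix_row_of_mem hσ hab]
      exact subset_span ⟨b, ⟨_, hab, rfl⟩, rfl⟩
    · rw [rookMatrix_row_of_forall_notMem (not_exists.1 ha)]
      exact zero_mem _
  · apply span_mono
    rintro _ ⟨b, ⟨⟨a, b⟩, hab, rfl⟩, rfl⟩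
    exact ⟨a, rookMatrix_row_of_mem hσ hab⟩

theorem rank_rookMatrix [Fintype m] [Fintype n] {σ : Set (m × n)} (hfst : σ.InjOn Prod.fst)
    (hsnd : σ.InjOn Prod.snd) : (rookMatrix F σ).rank = σ.ncard := by
  classical
  have hli : LinearIndependent F fun b : ↥(Prod.snd '' σ) => (Pi.single b.1 1 : n → F) :=
    (Pi.linearIndependent_single_one n F).comp Subtype.val Subtype.val_injective
  rw [Matrix.rank_eq_finrank_span_row, span_range_rookMatrix_row hfst, Set.image_eq_range,
    finrank_span_eq_card hli, ← Nat.card_eq_fintype_card, Nat.card_coe_set_eq, hsnd.ncard_image]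

end RookMatrix

section Corner

variable {α β : Type*} [LinearOrder α] [LinearOrder β] {σ : Set (α × β)}

theorem Set.ncard_add_one_eq_iff_ncard_sdiff {γ : Type*} {s t : Set γ} (hst : s ⊆ t)
    (ht : t.Finite) : s.ncard + 1 = t.ncard ↔ (t \ s).ncard = 1 := by
  have := Set.ncard_sdiff_add_ncard_of_subset hst ht
  omega

theorem mem_iff_ncard_corner (hσ : σ.Finite) (hfst : σ.InjOn Prod.fst)
    (hsnd : σ.InjOn Prod.snd) (p : α × β) :
    p ∈ σ ↔
      (σ ∩ {q | q.1 < p.1 ∧ p.2 ≤ q.2}).ncard + 1 = (σ ∩ {q | q.1 ≤ p.1 ∧ p.2 ≤ q.2}).ncard ∧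
      (σ ∩ {q | q.1 ≤ p.1 ∧ p.2 < q.2}).ncard + 1 = (σ ∩ {q | q.1 ≤ p.1 ∧ p.2 ≤ q.2}).ncard ∧
      (σ ∩ {q | q.1 < p.1 ∧ p.2 < q.2}).ncard + 1 = (σ ∩ {q | q.1 ≤ p.1 ∧ p.2 ≤ q.2}).ncard := by
  set row := σ ∩ {q | q.1 = p.1 ∧ p.2 ≤ q.2}
  set col := σ ∩ {q | q.1 ≤ p.1 ∧ q.2 = p.2}
  have hrow : (σ ∩ {q | q.1 ≤ p.1 ∧ p.2 ≤ q.2}) \ (σ ∩ {q | q.1 < p.1 ∧ p.2 ≤ q.2}) = row := by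
    ext q; grind
  have hcol : (σ ∩ {q | q.1 ≤ p.1 ∧ p.2 ≤ q.2}) \ (σ ∩ {q | q.1 ≤ p.1 ∧ p.2 < q.2}) = col := by
    ext q; grind
  have hboth :
      (σ ∩ {q | q.1 ≤ p.1 ∧ p.2 ≤ q.2}) \ (σ ∩ {q | q.1 < p.1 ∧ p.2 < q.2}) = row ∪ col := by
    ext q; simp only [row, col, Set.mem_sdiff, Set.mem_inter_iff, Set.mem_ofPred_eq,
      Set.mem_union]; grind
  rw [Set.ncard_add_one_eq_iff_ncard_sdiff (by grind) (hσ.subset Set.inter_subset_left), hrow,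
    Set.ncard_add_one_eq_iff_ncard_sdiff (by grind) (hσ.subset Set.inter_subset_left), hcol,
    Set.ncard_add_one_eq_iff_ncard_sdiff (by grind) (hσ.subset Set.inter_subset_left), hboth]
  constructor
  · intro hp
    have hrow_eq : row = {p} := by
      ext q
      exact ⟨fun hq => hfst hq.1 hp hq.2.1, by rintro rfl; exact ⟨hp, rfl, le_rfl⟩⟩
    have hcol_eq : col = {p} := by
      ext q
      exact ⟨fun hq => hsnd hq.1 hp hq.2.2, by rintro rfl; exact ⟨hp, le_rfl, rfl⟩⟩
    simp [hrow_eq, hcol_eq]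
  · rintro ⟨hrow₁, hcol₁, hboth₁⟩
    obtain ⟨x, hx⟩ := Set.ncard_eq_one.1 hrow₁
    obtain ⟨y, hy⟩ := Set.ncard_eq_one.1 hcol₁
    have hxy : x = y := by
      by_contra hne
      rw [hx, hy, Set.singleton_union, Set.ncard_pair hne] at hboth₁
      omega
    have hxrow : x ∈ row := hx ▸ Set.mem_singleton x
    have hycol : y ∈ col := hy ▸ Set.mem_singleton y
    rw [← hxy] at hycol
    exact Prod.ext hxrow.2.1 hycol.2.2 ▸ hxrow.1

end Corner

section RookPlacement

variable {F : Type*} [Field F] {N : ℕ} {μ : Fin N → ℕ} {σ : Set (Fin N × Fin N)}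

theorem rookMatrix_mem_MSet (hσ : σ ⊆ BoardSet μ) :
    (rookMatrix F σ : Fin N → Fin N → F) ∈ MSet F μ := by
  intro s t hst
  by_cases h : (s, t) ∈ σ
  · exact hσ h
  · simp [rookMatrix, h] at hst

theorem rkOn_rookMatrix (hσ : IsRookPlacementSet μ σ) (P Q : Fin N → Prop)
    [DecidablePred P] [DecidablePred Q] :
    rkOn μ (rookMatrix F σ) P Q = (σ ∩ {q | P q.1 ∧ Q q.2}).ncard := by
  obtain ⟨hB, hfst, hsnd⟩ := hσ
  let f : {a // μ a = 0 ∧ P a} × {b // μ b = 1 ∧ Q b} → Fin N × Fin N :=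
    Prod.map Subtype.val Subtype.val
  have hf : f.Injective := Subtype.val_injective.prodMap Subtype.val_injective
  have hpre : f ⁻¹' σ = f ⁻¹' (σ ∩ {q | P q.1 ∧ Q q.2}) := by
    ext ⟨a, b⟩
    simp [f, a.2.2, b.2.2]
  have hrange : σ ∩ {q | P q.1 ∧ Q q.2} ⊆ Set.range f := by
    rintro ⟨s, t⟩ ⟨hst, hs, ht⟩
    exact ⟨(⟨s, (hB hst).1, hs⟩, ⟨t, (hB hst).2.1, ht⟩), rfl⟩
  calc rkOn μ (rookMatrix F σ) P Q = (rookMatrix F (f ⁻¹' σ)).rank := rfl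
    _ = (f ⁻¹' σ).ncard :=
      rank_rookMatrix (fun _ hp _ hp' h => hf (hfst _ hp _ hp' (congrArg Subtype.val h)))
        (fun _ hp _ hp' h => hf (hsnd _ hp _ hp' (congrArg Subtype.val h)))
    _ = (σ ∩ {q | P q.1 ∧ Q q.2}).ncard := by
      rw [hpre, Set.ncard_preimage_of_injective_subset_range hf hrange]

theorem sigmaOf_rookMatrix (hσ : IsRookPlacementSet μ σ) : sigmaOf μ (rookMatrix F σ) = σ := by
  ext p
  have hcorner := mem_iff_ncard_corner σ.toFinite hσ.2.1 hσ.2.2 p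
  simp only [sigmaOf, Set.mem_ofPred_eq, rkOn_rookMatrix hσ]
  exact ⟨fun h => hcorner.2 h.2, fun hp => ⟨hσ.1 hp, hcorner.1 hp⟩⟩

end RookPlacement

theorem stmt12_general {F : Type*} [Field F] {N : ℕ}
    (μ : Fin N → ℕ)
    (σ : Set (Fin N × Fin N)) :
    (∃ M : Fin N → Fin N → F, M ∈ MSet F μ ∧ sigmaOf μ M = σ) ↔
      IsRookPlacementSet μ σ := by
  refine ⟨?_, fun hσ => ⟨rookMatrix F σ, rookMatrix_mem_MSet hσ.1, sigmaOf_rookMatrix hσ⟩⟩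
  rintro ⟨M, -, rfl⟩
  exact isRookPlacementSet_sigmaOf

/-- For `σ ⊆ B_μ`: there exists `M ∈ M_μ(F_q)` with `σ(M) = σ` iff `σ` is a rook
placement on `B_μ`. -/
theorem stmt12 {F : Type*} [Field F] [Fintype F] {N : ℕ} (hN : 1 ≤ N)
    (μ : Fin N → ℕ) (hμ : ∀ i, μ i ≤ 1)
    (hμ0 : μ ≠ fun _ => 0) (hμ1 : μ ≠ fun _ => 1)
    (σ : Set (Fin N × Fin N)) (hσ : σ ⊆ BoardSet μ) :
    (∃ M : Fin N → Fin N → F, M ∈ MSet F μ ∧ sigmaOf μ M = σ) ↔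
      IsRookPlacementSet μ σ :=
  stmt12_general μ σ
end

section
/- Let μ ∈ {0,1}^N with μ not equal to the all-zeros or all-ones tuple, and let M ∈ M_μ(F_q). Then for every (s,t) ∈ σ(M), rank M(s,t) = inv(σ(M), s, t) + 1. -/
/-!
Row-reduce `M` from the top. Say that row `a` raises the rank at column cutoff `j` if, restricted
to the columns `≥ j`, it is not in the span of the rows above it. The rank of the rows `< s` and
columns `> t` is then the number of rows `a < s` raising the rank at `t + 1` (greedy basis).
Raising the rank is lost as `j` grows, and `(a, c) ∈ σ(M)` exactly when `c` is the last cutoff at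
which row `a` still raises it; the one non-formal point is that deleting that column `c` does not
lower the rank of the rows above `a`. So every row `a < s` raising the rank at `t + 1` carries
exactly one rook of `σ(M)`, to the right of `t`, and the third defining condition of `σ(M)` at
`(s, t)` reads `rank M(s,t) = rank M(s⁻,t⁺) + 1`.
-/

open Submodule Module Finset

section

variable {K V W : Type*} [Field K] [AddCommGroup V] [Module K V] [AddCommGroup W] [Module K W]

open Classical in
theorem finrank_span_image_eq_card_filter [Module.Finite K V] {ι : Type*} [LinearOrder ι]
    (v : ι → V) (s : Finset ι) :
    finrank K (span K (v '' s)) = #{a ∈ s | v a ∉ span K (v '' {b | b ∈ s ∧ b < a})} := by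
  induction s using Finset.induction_on_max with
  | empty => simp
  | insert a s hlt ih =>
    have hbelow : ∀ x ∈ s, {b | b ∈ insert a s ∧ b < x} = {b | b ∈ s ∧ b < x} := by
      intro x hx
      ext b
      simp only [Set.mem_ofPred_eq, Finset.mem_insert, and_congr_left_iff, or_iff_right_iff_imp]
      rintro hb rfl
      exact absurd (hlt x hx) hb.not_gt
    have ha : {b | b ∈ insert a s ∧ b < a} = ↑s := by
      ext b
      simp only [Set.mem_ofPred_eq, Finset.mem_insert, Finset.mem_coe]
      exact ⟨fun ⟨hb, hba⟩ => hb.resolve_left hba.ne, fun hb => ⟨Or.inr hb, hlt b hb⟩⟩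
    have has : a ∉ s := fun h => (hlt a h).false
    rw [Finset.filter_insert, Finset.filter_congr (fun x hx => by rw [hbelow x hx]), ha,
      Finset.coe_insert, Set.image_insert_eq, span_insert, sup_comm]
    split_ifs with hv
    · rw [sup_eq_left.mpr ((span_singleton_le_iff_mem _ _).mpr hv), ih]
    · rw [Finset.card_insert_of_notMem (by simp [has]), finrank_sup_span_singleton hv, ih]

theorem finrank_map_eq_of_disjoint_ker {f : V →ₗ[K] W} {p : Submodule K V}
    (h : Disjoint p (LinearMap.ker f)) : finrank K (p.map f) = finrank K p := by
  rw [← LinearMap.range_domRestrict]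
  exact LinearMap.finrank_range_of_inj (LinearMap.injective_domRestrict_iff.mpr h)

/-- If the line `K ∙ e` met `p`, then `v`, which agrees with an element of `p` modulo `ker f`, would
lie in `p`. -/
theorem disjoint_ker_of_notMem_of_map_mem {f : V →ₗ[K] W} {p : Submodule K V} {v e : V}
    (hker : ∀ x ∈ p ⊔ K ∙ v, f x = 0 → x ∈ K ∙ e) (hv : v ∉ p) (hfv : f v ∈ p.map f) :
    Disjoint p (LinearMap.ker f) := by
  obtain ⟨u, hu, hfu⟩ := hfv
  obtain ⟨b, hb⟩ := mem_span_singleton.mp <| hker (v - u)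
    (sub_mem (mem_sup_right (mem_span_singleton_self v)) (mem_sup_left hu))
    (by rw [map_sub, hfu, sub_self])
  rw [disjoint_iff_inf_le]
  rintro w ⟨hwp, hwf⟩
  obtain ⟨c, rfl⟩ := mem_span_singleton.mp (hker w (mem_sup_left hwp) hwf)
  rcases eq_or_ne c 0 with rfl | hc
  · simp
  have he : e ∈ p := (smul_mem_iff p hc).mp hwp
  exact absurd (by simpa using add_mem hu (hb ▸ p.smul_mem b he : v - u ∈ p)) hv

end

section Board

variable {F : Type*} [Field F] {N : ℕ} (μ : Fin N → ℕ) (M : Fin N → Fin N → F)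

def colProj (j : ℕ) : (Fin N → F) →ₗ[F] Fin N → F :=
  LinearMap.pi fun b => if μ b = 1 ∧ j ≤ b.val then LinearMap.proj b else 0

/-- Cutoffs are natural numbers, rows `a < i` and columns `j ≤ b`, so that the row space of
`M(s,t)` is `rowSpan μ M (s + 1) t`. Columns are cut off by zeroing them, not by passing to a
subtype. -/
def rowSpan (i j : ℕ) : Submodule F (Fin N → F) :=
  (span F (M '' {a | μ a = 0 ∧ a.val < i})).map (colProj μ j)

def RaisesRank (j : ℕ) (a : Fin N) : Prop :=
  colProj μ j (M a) ∉ rowSpan μ M a.val j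

variable {μ M}

theorem colProj_apply (j : ℕ) (v : Fin N → F) (b : Fin N) :
    colProj μ j v b = if μ b = 1 ∧ j ≤ b.val then v b else 0 := by
  simp only [colProj, LinearMap.pi_apply]
  split_ifs <;> rfl

theorem colProj_comp_colProj {j' j : ℕ} (h : j' ≤ j) :
    colProj μ j ∘ₗ colProj μ j' = (colProj μ j : (Fin N → F) →ₗ[F] Fin N → F) := by
  refine LinearMap.ext fun v => funext fun b => ?_
  simp only [LinearMap.comp_apply, colProj_apply]
  grind

theorem colProj_eq_zero_of_le {j : ℕ} (hj : N ≤ j) :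
    (colProj μ j : (Fin N → F) →ₗ[F] Fin N → F) = 0 := by
  refine LinearMap.ext fun v => funext fun b => ?_
  simp only [colProj_apply, LinearMap.zero_apply, Pi.zero_apply]
  grind

theorem colProj_succ_of_ne {c : Fin N} (hc : μ c ≠ 1) :
    (colProj μ (c.val + 1) : (Fin N → F) →ₗ[F] Fin N → F) = colProj μ c.val := by
  refine LinearMap.ext fun v => funext fun b => ?_
  simp only [colProj_apply]
  have : b.val = c.val → b = c := Fin.ext
  grind

theorem mem_span_single_of_colProj_succ_eq_zero {c : Fin N} {x : Fin N → F}
    (hx : x ∈ LinearMap.range (colProj μ c.val)) (hx' : colProj μ (c.val + 1) x = 0) :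
    x ∈ F ∙ Pi.single c 1 := by
  obtain ⟨y, rfl⟩ := hx
  refine mem_span_singleton.mpr ⟨colProj μ c.val y c, funext fun b => ?_⟩
  have hb := congrFun hx' b
  simp only [colProj_apply, Pi.zero_apply] at hb ⊢
  by_cases hbc : b = c
  · subst hbc; simp
  · have : b.val ≠ c.val := fun h => hbc (Fin.ext h)
    simp only [Pi.smul_apply, Pi.single_apply, hbc, if_false, smul_zero]
    grind

theorem map_colProj_rowSpan {j' j : ℕ} (h : j' ≤ j) (i : ℕ) :
    (rowSpan μ M i j').map (colProj μ j) = rowSpan μ M i j := by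
  rw [rowSpan, ← map_comp, colProj_comp_colProj h, rowSpan]

theorem rowSpan_le_range (i j : ℕ) : rowSpan μ M i j ≤ LinearMap.range (colProj μ j) :=
  LinearMap.map_le_range

theorem RaisesRank.anti {j' j : ℕ} {a : Fin N} (h : j' ≤ j) (ha : RaisesRank μ M j a) :
    RaisesRank μ M j' a := fun ha' => ha <| by
  have := mem_map_of_mem (f := colProj μ j) ha'
  rwa [map_colProj_rowSpan h, ← LinearMap.comp_apply, colProj_comp_colProj h] at this

theorem rowSpan_succ {a : Fin N} (h0 : μ a = 0) (j : ℕ) :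
    rowSpan μ M (a.val + 1) j = rowSpan μ M a.val j ⊔ F ∙ colProj μ j (M a) := by
  have hrows : {b : Fin N | μ b = 0 ∧ b.val < a.val + 1} =
      insert a {b | μ b = 0 ∧ b.val < a.val} := by
    ext b
    simp only [Set.mem_ofPred_eq, Set.mem_insert_iff, ← Fin.val_inj]
    grind
  rw [rowSpan, rowSpan, hrows, Set.image_insert_eq, span_insert, Submodule.map_sup, sup_comm,
    map_span _ {M a}, Set.image_singleton]

open Classical in
theorem finrank_rowSpan_succ {a : Fin N} (h0 : μ a = 0) (j : ℕ) :
    finrank F (rowSpan μ M (a.val + 1) j) =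
      finrank F (rowSpan μ M a.val j) + if RaisesRank μ M j a then 1 else 0 := by
  rw [rowSpan_succ h0]
  split_ifs with ha
  · exact finrank_sup_span_singleton ha
  · rw [sup_eq_left.mpr ((span_singleton_le_iff_mem _ _).mpr (not_not.mp ha)), add_zero]

open Classical in
theorem finrank_rowSpan_eq_card (i j : ℕ) :
    finrank F (rowSpan μ M i j) = #{a | μ a = 0 ∧ a.val < i ∧ RaisesRank μ M j a} := by
  set rows : Finset (Fin N) := {a | μ a = 0 ∧ a.val < i}
  have hbelow {a : Fin N} (ha : a ∈ rows) :
      {b | b ∈ rows ∧ b < a} = {b | μ b = 0 ∧ b.val < a.val} := by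
    ext b
    simp only [rows, Finset.mem_filter, Finset.mem_univ, true_and] at ha ⊢
    grind
  rw [rowSpan, ← span_image, ← Set.image_comp,
    show {a | μ a = 0 ∧ a.val < i} = (rows : Set (Fin N)) by simp [rows],
    finrank_span_image_eq_card_filter, Finset.filter_congr (fun a ha => by rw [hbelow ha]),
    Finset.filter_filter]
  simp only [RaisesRank, rowSpan, map_span, Set.image_image, Function.comp_apply, and_assoc]

theorem finrank_rowSpan_succ_col_eq {a c : Fin N} (hc : RaisesRank μ M c.val a)
    (hc' : ¬RaisesRank μ M (c.val + 1) a) :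
    finrank F (rowSpan μ M a.val (c.val + 1)) = finrank F (rowSpan μ M a.val c.val) := by
  rw [← map_colProj_rowSpan (Nat.le_succ c.val)]
  refine finrank_map_eq_of_disjoint_ker (disjoint_ker_of_notMem_of_map_mem (e := Pi.single c 1)
    (fun x hx hx0 => mem_span_single_of_colProj_succ_eq_zero ?_ hx0) hc ?_)
  · have hrange : rowSpan μ M a.val c.val ⊔ F ∙ colProj μ c.val (M a) ≤
        LinearMap.range (colProj μ c.val) :=
      sup_le (rowSpan_le_range _ _)
        ((span_singleton_le_iff_mem _ _).mpr (LinearMap.mem_range_self _ _))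
    exact hrange hx
  · rw [← LinearMap.comp_apply, colProj_comp_colProj (Nat.le_succ _),
      map_colProj_rowSpan (Nat.le_succ _)]
    exact not_not.mp hc'

theorem rkOn_eq_finrank_rowSpan (rowP colP : Fin N → Prop) [DecidablePred rowP]
    [DecidablePred colP] {i j : ℕ} (hrow : ∀ a, rowP a ↔ a.val < i)
    (hcol : ∀ b, colP b ↔ j ≤ b.val) :
    rkOn μ M rowP colP = finrank F (rowSpan μ M i j) := by
  set restrict := LinearMap.funLeft F F (Subtype.val : {b // μ b = 1 ∧ colP b} → Fin N)
  have hproj : restrict ∘ₗ colProj μ j = restrict := LinearMap.ext fun v => funext fun b => by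
    simp [restrict, colProj_apply, b.2.1, (hcol b).mp b.2.2]
  have hdisj : Disjoint (rowSpan μ M i j) (LinearMap.ker restrict) := by
    rw [disjoint_iff_inf_le]
    rintro x ⟨hx, hx0⟩
    obtain ⟨y, rfl⟩ := rowSpan_le_range i j hx
    have hy : restrict y = 0 := by rw [← hproj]; exact hx0
    refine (mem_bot F).mpr (funext fun b => ?_)
    rw [colProj_apply]
    split_ifs with hb
    · exact congrFun hy ⟨b, hb.1, (hcol b).mpr hb.2⟩
    · rfl
  have hrows : Set.range (Matrix.of fun (a : {a // μ a = 0 ∧ rowP a})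
      (b : {b // μ b = 1 ∧ colP b}) => M a.1 b.1).row =
        restrict ∘ M '' {a | μ a = 0 ∧ a.val < i} := by
    ext w
    simp [restrict, hrow]
    rfl
  rw [rkOn, Matrix.rank_eq_finrank_span_row, ← finrank_map_eq_of_disjoint_ker hdisj, rowSpan,
    ← map_comp, hproj, map_span, ← Set.image_comp, hrows]

theorem mem_sigmaOf_iff {s t : Fin N} :
    (s, t) ∈ sigmaOf μ M ↔
      (s, t) ∈ BoardSet μ ∧ RaisesRank μ M t.val s ∧ ¬RaisesRank μ M (t.val + 1) s := by
  have hle (a : Fin N) : a ≤ s ↔ a.val < s.val + 1 := Fin.le_def.trans Nat.lt_add_one_iff.symm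
  have hgt (b : Fin N) : t < b ↔ t.val + 1 ≤ b.val := Fin.lt_def.trans Nat.add_one_le_iff.symm
  simp only [sigmaOf, Set.mem_ofPred_eq]
  rw [rkOn_eq_finrank_rowSpan _ _ (fun _ => Fin.lt_def) (fun _ => Fin.le_def),
    rkOn_eq_finrank_rowSpan _ _ hle (fun _ => Fin.le_def), rkOn_eq_finrank_rowSpan _ _ hle hgt,
    rkOn_eq_finrank_rowSpan _ _ (fun _ => Fin.lt_def) hgt]
  refine and_congr_right fun hb => ?_
  rw [finrank_rowSpan_succ (a := s) hb.1, finrank_rowSpan_succ (a := s) hb.1]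
  constructor
  · rintro ⟨h1, h2, h3⟩
    split_ifs at h1 h2 h3 with ht ht' <;> first | omega | exact ⟨ht, ht'⟩
  · rintro ⟨ht, ht'⟩
    have := finrank_rowSpan_succ_col_eq ht ht'
    simp [ht, ht', this]

theorem not_raisesRank_of_le {j : ℕ} (hj : N ≤ j) (a : Fin N) : ¬RaisesRank μ M j a :=
  fun h => h (by rw [colProj_eq_zero_of_le hj]; exact zero_mem _)

theorem raisesRank_succ_iff {c a : Fin N} (hc : μ c ≠ 1) :
    RaisesRank μ M (c.val + 1) a ↔ RaisesRank μ M c.val a := by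
  simp only [RaisesRank, rowSpan, colProj_succ_of_ne hc]

theorem exists_mem_sigmaOf {a t : Fin N} (ha : μ a = 0) (hat : a < t)
    (ht : RaisesRank μ M (t.val + 1) a) : ∃ c, t < c ∧ (a, c) ∈ sigmaOf μ M := by
  classical
  set c := Nat.findGreatest (RaisesRank μ M · a) N
  have htc : t.val + 1 ≤ c := Nat.le_findGreatest t.isLt ht
  have hc : RaisesRank μ M c a := Nat.findGreatest_spec (P := (RaisesRank μ M · a)) t.isLt ht
  have hcN : c < N :=
    (Nat.findGreatest_le N).lt_of_ne fun h => not_raisesRank_of_le h.ge a hc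
  have hc' : ¬RaisesRank μ M (c + 1) a := Nat.findGreatest_is_greatest c.lt_add_one hcN
  have hμc : μ ⟨c, hcN⟩ = 1 := by
    by_contra h
    exact hc' ((raisesRank_succ_iff h).mpr hc)
  have htc' : t < ⟨c, hcN⟩ := Fin.lt_def.mpr htc
  exact ⟨⟨c, hcN⟩, htc', mem_sigmaOf_iff.mpr ⟨⟨ha, hμc, hat.trans htc'⟩, hc, hc'⟩⟩

theorem injOn_fst_sigmaOf : Set.InjOn Prod.fst (sigmaOf μ M) := by
  have hnot_lt {a c c' : Fin N} (h : (a, c) ∈ sigmaOf μ M) (h' : (a, c') ∈ sigmaOf μ M) :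
      ¬c < c' := fun hlt =>
    (mem_sigmaOf_iff.mp h).2.2 ((mem_sigmaOf_iff.mp h').2.1.anti hlt)
  rintro ⟨a, c⟩ h ⟨a', c'⟩ h' (rfl : a = a')
  exact Prod.ext rfl (le_antisymm (not_lt.mp (hnot_lt h' h)) (not_lt.mp (hnot_lt h h')))

theorem rkOn_lt_lt_eq_ncard_sigmaOf {s t : Fin N} (hst : s ≤ t) :
    rkOn μ M (· < s) (t < ·) = Set.ncard {p ∈ sigmaOf μ M | p.1 < s ∧ t < p.2} := by
  classical
  have hfst : {a | μ a = 0 ∧ a.val < s.val ∧ RaisesRank μ M (t.val + 1) a} =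
      Prod.fst '' {p ∈ sigmaOf μ M | p.1 < s ∧ t < p.2} := by
    ext a
    constructor
    · rintro ⟨ha, has, ht⟩
      obtain ⟨c, htc, hc⟩ := exists_mem_sigmaOf ha (lt_of_lt_of_le has hst) ht
      exact ⟨(a, c), ⟨hc, has, htc⟩, rfl⟩
    · rintro ⟨⟨a, c⟩, ⟨hc, has, htc⟩, rfl⟩
      obtain ⟨hb, hR, -⟩ := mem_sigmaOf_iff.mp hc
      exact ⟨hb.1, has, hR.anti htc⟩
  rw [rkOn_eq_finrank_rowSpan _ _ (fun _ => Fin.lt_def)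
      (fun _ => Fin.lt_def.trans Nat.add_one_le_iff.symm), finrank_rowSpan_eq_card,
    ← Set.ncard_coe_finset, ← (injOn_fst_sigmaOf.mono (Set.sep_subset _ _)).ncard_image,
    ← hfst]
  simp

end Board

theorem stmt13_general {F : Type*} [Field F] {N : ℕ} (μ : Fin N → ℕ) (M : Fin N → Fin N → F)
    (s t : Fin N) (hst : (s, t) ∈ sigmaOf μ M) :
    rkOn μ M (fun a => a ≤ s) (fun b => t ≤ b) =
      Set.ncard {p ∈ sigmaOf μ M | p.1 < s ∧ t < p.2} + 1 := by
  obtain ⟨hb, -, -, hrank⟩ := hst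
  rw [← hrank, rkOn_lt_lt_eq_ncard_sigmaOf hb.2.2.le]

/-- For `(s,t) ∈ σ(M)`, the rank of `M(s,t)` equals the local inversion number
`inv(σ(M),s,t)` plus `1`. -/
theorem stmt13 {F : Type*} [Field F] [Fintype F] {N : ℕ} (hN : 1 ≤ N)
    (μ : Fin N → ℕ) (hμ : ∀ i, μ i ≤ 1)
    (hμ0 : μ ≠ fun _ => 0) (hμ1 : μ ≠ fun _ => 1)
    (M : Fin N → Fin N → F) (hM : M ∈ MSet F μ)
    (s t : Fin N) (hst : (s, t) ∈ sigmaOf μ M) :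
    rkOn μ M (fun a => a ≤ s) (fun b => t ≤ b) =
      Set.ncard {p ∈ sigmaOf μ M | p.1 < s ∧ t < p.2} + 1 :=
  stmt13_general μ M s t hst
end

section
/- Let μ = (μ_1,…,μ_N) ∈ {0,1}^N and let λ ⊆ {1,…,N} be such that (λ ∩ S_μ, λ ∩ T_μ) satisfies the interlacing condition. Then for every complex number q with q ≠ 0 and q ≠ 1, the sum over all 1 ≤ m ≤ N with m ∉ λ of (−1)^{μ_m} q^{κ(m,μ,λ)} equals (q^{N−|μ|} − q^{|μ|})/(q − 1), where |μ| = μ_1 + ⋯ + μ_N. -/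
/-- `κ(m,μ,λ) = |S_μ(m−1) \ λ| + |T_μ(m+1) \ λ| + |λ|/2`, where
`S_μ(m−1) = {s ∈ S_μ : s < m}` and `T_μ(m+1) = {t ∈ T_μ : t > m}`. -/
def kappa {N : ℕ} (μ : Fin N → ℕ) (lam : Finset (Fin N)) (m : Fin N) : ℕ :=
  (((Sset μ).filter fun s => s < m) \ lam).card +
    (((Tset μ).filter fun t => m < t) \ lam).card + lam.card / 2

/-!
The sum telescopes. Walk along `0, 1, …, N` at height
`h j = #{s ∈ S_μ \ λ | s < j} + #{t ∈ T_μ \ λ | j ≤ t} + |λ|/2`: the walk steps up at the free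
positions of `S_μ`, down at those of `T_μ`, and stays level on `λ`. At a free position `m` the
exponent `κ(m,μ,λ)` is the lower of `h m` and `h (m+1)`, so the summand is
`(q ^ h (m+1) - q ^ h m) / (q - 1)`. As the interlacing pair has equal sizes,
`|λ|/2 = |λ ∩ S_μ| = |λ ∩ T_μ|`, whence `h 0 = |T_μ| = |μ|` and `h N = |S_μ| = N - |μ|`.
-/

open Finset

section BinaryWord

variable {N : ℕ} {μ : Fin N → ℕ}

lemma Tset_eq_compl_Sset (hμ : ∀ i, μ i ≤ 1) : Tset μ = (Sset μ)ᶜ := by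
  ext i
  have := hμ i
  simp only [Tset, Sset, mem_compl, mem_filter, mem_univ, true_and]
  omega

lemma card_Tset (hμ : ∀ i, μ i ≤ 1) : #(Tset μ) = ∑ i, μ i := by
  rw [Tset, card_filter]
  refine sum_congr rfl fun i _ => ?_
  have := hμ i
  split_ifs <;> omega

lemma card_Sset (hμ : ∀ i, μ i ≤ 1) : #(Sset μ) = N - ∑ i, μ i := by
  have := card_le_univ (Sset μ)
  rw [← card_Tset hμ, Tset_eq_compl_Sset hμ, card_compl, Fintype.card_fin] at *
  omega

lemma card_div_two_eq_card_inter_Sset (hμ : ∀ i, μ i ≤ 1) (lam : Finset (Fin N))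
    (h : #(lam ∩ Sset μ) = #(lam ∩ Tset μ)) : #lam / 2 = #(lam ∩ Sset μ) := by
  have hsplit : #(lam ∩ Sset μ) + #(lam ∩ Tset μ) = #lam := by
    rw [Tset_eq_compl_Sset hμ, ← sdiff_eq_inter_compl, card_inter_add_card_sdiff]
  omega

end BinaryWord

section Telescoping

variable {N : ℕ}

lemma card_filter_val_lt_succ (A : Finset (Fin N)) (m : Fin N) :
    #{s ∈ A | s.val < m.val + 1} = #{s ∈ A | s.val < m.val} + if m ∈ A then 1 else 0 := by
  rw [card_filter, card_filter, ← sum_ite_eq' A m (fun _ => 1), ← sum_add_distrib]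
  refine sum_congr rfl fun s _ => ?_
  simp only [Fin.ext_iff]
  split_ifs <;> omega

lemma card_filter_le_val (B : Finset (Fin N)) (m : Fin N) :
    #{t ∈ B | m.val ≤ t.val} = #{t ∈ B | m.val + 1 ≤ t.val} + if m ∈ B then 1 else 0 := by
  rw [card_filter, card_filter, ← sum_ite_eq' B m (fun _ => 1), ← sum_add_distrib]
  refine sum_congr rfl fun t _ => ?_
  simp only [Fin.ext_iff]
  split_ifs <;> omega

variable (μ : Fin N → ℕ) (lam : Finset (Fin N))

lemma kappa_eq (m : Fin N) :
    kappa μ lam m = #{s ∈ Sset μ \ lam | s.val < m.val} +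
      #{t ∈ Tset μ \ lam | m.val + 1 ≤ t.val} + #lam / 2 := by
  unfold kappa
  congr 3 <;> ext a <;>
    simp only [mem_sdiff, mem_filter, Fin.lt_def, Nat.add_one_le_iff] <;> tauto

def pathHeight (j : ℕ) : ℕ :=
  #{s ∈ Sset μ \ lam | s.val < j} + #{t ∈ Tset μ \ lam | j ≤ t.val} + #lam / 2

lemma pathHeight_eq_kappa_add (m : Fin N) :
    pathHeight μ lam m = kappa μ lam m + if m ∈ Tset μ \ lam then 1 else 0 := by
  rw [pathHeight, kappa_eq, card_filter_le_val]
  ring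

lemma pathHeight_succ_eq_kappa_add (m : Fin N) :
    pathHeight μ lam (m + 1) = kappa μ lam m + if m ∈ Sset μ \ lam then 1 else 0 := by
  rw [pathHeight, kappa_eq, card_filter_val_lt_succ]
  ring

lemma pathHeight_succ_of_mem (m : Fin N) (hm : m ∈ lam) :
    pathHeight μ lam (m + 1) = pathHeight μ lam m := by
  simp [pathHeight_eq_kappa_add, pathHeight_succ_eq_kappa_add, hm]

lemma pathHeight_zero : pathHeight μ lam 0 = #(Tset μ \ lam) + #lam / 2 := by
  simp [pathHeight]

lemma pathHeight_self : pathHeight μ lam N = #(Sset μ \ lam) + #lam / 2 := by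
  simp [pathHeight, Fin.is_lt]

variable {μ}

lemma neg_one_pow_mul_pow_kappa (hμ : ∀ i, μ i ≤ 1) {q : ℂ} (hq : q ≠ 1) (m : Fin N)
    (hm : m ∉ lam) :
    (-1 : ℂ) ^ μ m * q ^ kappa μ lam m =
      (q ^ pathHeight μ lam (m + 1) - q ^ pathHeight μ lam m) / (q - 1) := by
  have hq' : q - 1 ≠ 0 := sub_ne_zero.mpr hq
  rw [pathHeight_eq_kappa_add, pathHeight_succ_eq_kappa_add, eq_div_iff hq']
  rcases Nat.le_one_iff_eq_zero_or_eq_one.mp (hμ m) with h | h <;>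
    simp [Sset, Tset, h, hm, pow_succ] <;> ring

theorem sum_neg_one_pow_mul_pow_kappa (hμ : ∀ i, μ i ≤ 1) {q : ℂ} (hq : q ≠ 1) :
    ∑ m ∈ univ \ lam, (-1 : ℂ) ^ μ m * q ^ kappa μ lam m =
      (q ^ pathHeight μ lam N - q ^ pathHeight μ lam 0) / (q - 1) := by
  let step (j : ℕ) : ℂ := (q ^ pathHeight μ lam (j + 1) - q ^ pathHeight μ lam j) / (q - 1)
  calc ∑ m ∈ univ \ lam, (-1 : ℂ) ^ μ m * q ^ kappa μ lam m
      = ∑ m ∈ univ \ lam, step m :=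
        sum_congr rfl fun m hm => neg_one_pow_mul_pow_kappa lam hμ hq m (mem_sdiff.mp hm).2
    _ = ∑ m : Fin N, step m :=
        sum_subset (subset_univ _) fun m _ hm => by
          simp [step, pathHeight_succ_of_mem, by simpa using hm]
    _ = ∑ j ∈ range N, step j := Fin.sum_univ_eq_sum_range step N
    _ = _ := by rw [← sum_div, sum_range_sub (fun j => q ^ pathHeight μ lam j)]

end Telescoping

theorem stmt19_general {N : ℕ} (μ : Fin N → ℕ) (hμ : ∀ i, μ i ≤ 1)
    (lam : Finset (Fin N)) (hint : Interlacing (lam ∩ Sset μ) (lam ∩ Tset μ))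
    (q : ℂ) (hq1 : q ≠ 1) :
    ∑ m ∈ Finset.univ \ lam, (-1 : ℂ) ^ (μ m) * q ^ kappa μ lam m =
      (q ^ (N - ∑ i, μ i) - q ^ (∑ i, μ i)) / (q - 1) := by
  have hS := card_div_two_eq_card_inter_Sset hμ lam hint.1
  have hT : #lam / 2 = #(lam ∩ Tset μ) := hS.trans hint.1
  have h0 : pathHeight μ lam 0 = ∑ i, μ i := by
    rw [pathHeight_zero, hT, inter_comm, card_sdiff_add_card_inter, card_Tset hμ]
  have hN : pathHeight μ lam N = N - ∑ i, μ i := by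
    rw [pathHeight_self, hS, inter_comm, card_sdiff_add_card_inter, card_Sset hμ]
  rw [sum_neg_one_pow_mul_pow_kappa lam hμ hq1, h0, hN]

/-- `Σ_{m ∉ λ} (−1)^{μ_m} q^{κ(m,μ,λ)} = (q^{N−|μ|} − q^{|μ|})/(q − 1)`. -/
theorem stmt19 {N : ℕ} (hN : 1 ≤ N) (μ : Fin N → ℕ) (hμ : ∀ i, μ i ≤ 1)
    (lam : Finset (Fin N)) (hint : Interlacing (lam ∩ Sset μ) (lam ∩ Tset μ))
    (q : ℂ) (hq0 : q ≠ 0) (hq1 : q ≠ 1) :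
    ∑ m ∈ Finset.univ \ lam, (-1 : ℂ) ^ (μ m) * q ^ kappa μ lam m =
      (q ^ (N - ∑ i, μ i) - q ^ (∑ i, μ i)) / (q - 1) :=
  stmt19_general μ hμ lam hint q hq1
end
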